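/- arXiv:2011.12732 — 8 statements merged into one kernel-verified Lean document; each statement's English description precedes it below -/
import Mathlib

section
/- Let m, β, γ > 0 be real constants and let λ ∈ ℂ. There exists a twice continuously differentiable function f : [0,1] → ℂ, not identically zero, satisfying f''(x) = λ² f(x) for all x ∈ (0,1), f'(0) = (γλ + β) f(0), and f'(1) + m λ² f(1) = 0, if and only if λ satisfies the characteristic equation e^{2λ}((1+γ)λ + β)(1 + mλ) = ((1−γ)λ − β)(1 − mλ). Moreover, every twice continuously differentiable f : [0,1] → ℂ satisfying these three conditions is a scalar multiple of f_λ(x) = ((1+γ)λ + β)e^{λx} + ((1−γ)λ − β)e^{−λx}; in particular, each eigenvalue of this boundary eigenvalue problem is geometrically simple. -/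
/-!
For `λ ≠ 0` every solution of `f'' = λ² f` on `[0, 1]` is `A e^{λx} + B e^{-λx}`, because
`(f' - μ f) e^{μx}` is constant for `μ = ±λ`. The condition at `0` reads `A Q = B P` with
`P = (1+γ)λ + β`, `Q = (1-γ)λ - β`; as `P + Q = 2λ ≠ 0`, this forces `(A, B) = c (P, Q)`, i.e.
`f = c f_λ`. On `f_λ` the condition at `1` is `λ e^{-λ}` times the difference of the two sides of
the characteristic equation. For `λ = 0`, `f'` is constant, so `f'(1) = 0` and `f'(0) = β f(0)`
force `f = 0`, while the characteristic equation becomes `β = -β`.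
-/

open Set

lemma hasDerivAt_cexp_const_mul_ofReal (l : ℂ) (x : ℝ) :
    HasDerivAt (fun y : ℝ => Complex.exp (l * y)) (l * Complex.exp (l * x)) x := by
  simpa [mul_comm] using (((hasDerivAt_id (x : ℂ)).const_mul l).cexp).comp_ofReal

lemma eqOn_Icc_of_eqOn_Ioo {E : Type*} [TopologicalSpace E] [T2Space E] {f g : ℝ → E} {a b : ℝ}
    (hf : Continuous f) (hg : Continuous g) (hab : a ≠ b) (h : EqOn f g (Ioo a b)) :
    EqOn f g (Icc a b) := by
  simpa only [closure_Ioo hab] using h.closure hf hg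

lemma eq_left_of_deriv_eq_zero_on_Icc {E : Type*} [NormedAddCommGroup E] [NormedSpace ℝ E]
    {g : ℝ → E} {a b : ℝ} (hg : Differentiable ℝ g) (h : ∀ x ∈ Icc a b, deriv g x = 0) :
    ∀ x ∈ Icc a b, g x = g a :=
  constant_of_has_deriv_right_zero hg.continuous.continuousOn fun x hx =>
    (h x (Ico_subset_Icc_self hx) ▸ (hg x).hasDerivAt).hasDerivWithinAt

lemma exists_eq_mul_and_eq_mul_of_mul_eq_mul {K : Type*} [Field K] {A B P Q : K}
    (hPQ : P ≠ 0 ∨ Q ≠ 0) (h : A * Q = B * P) : ∃ c, A = c * P ∧ B = c * Q := by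
  rcases hPQ with hP | hQ
  · exact ⟨A / P, by field_simp, by field_simp; linear_combination -h⟩
  · exact ⟨B / Q, by field_simp; linear_combination h, by field_simp⟩

noncomputable def expCombo (A B l : ℂ) (x : ℝ) : ℂ :=
  A * Complex.exp (l * x) + B * Complex.exp (-(l * x))

section expCombo

variable (A B l : ℂ)

lemma hasDerivAt_expCombo (x : ℝ) :
    HasDerivAt (expCombo A B l) (expCombo (l * A) (-(l * B)) l x) x := by
  have h : HasDerivAt (fun y : ℝ => A * Complex.exp (l * y) + B * Complex.exp (-(l * y)))
      (A * (l * Complex.exp (l * x)) + B * (-l * Complex.exp (-(l * x)))) x := by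
    simpa only [neg_mul] using ((hasDerivAt_cexp_const_mul_ofReal l x).const_mul A).fun_add
      ((hasDerivAt_cexp_const_mul_ofReal (-l) x).const_mul B)
  exact h.congr_deriv (by simp only [expCombo]; ring)

lemma deriv_expCombo : deriv (expCombo A B l) = expCombo (l * A) (-(l * B)) l :=
  funext fun x => (hasDerivAt_expCombo A B l x).deriv

lemma deriv_deriv_expCombo (x : ℝ) :
    deriv (deriv (expCombo A B l)) x = l ^ 2 * expCombo A B l x := by
  simp only [deriv_expCombo, expCombo]
  ring

lemma contDiff_expCombo {n : WithTop ℕ∞} : ContDiff ℝ n (expCombo A B l) := by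
  have h : ContDiff ℝ n fun x : ℝ => (x : ℂ) := Complex.ofRealCLM.contDiff
  unfold expCombo
  fun_prop

lemma expCombo_mul_mul (c : ℂ) : expCombo (c * A) (c * B) l = c • expCombo A B l := by
  funext x
  simp only [expCombo, Pi.smul_apply, smul_eq_mul]
  ring

end expCombo

section SecondOrder

variable {f : ℝ → ℂ} {l μ : ℂ} {a b : ℝ}

lemma deriv_sub_mul_mul_cexp_eq (hf : Differentiable ℝ f) (hf' : Differentiable ℝ (deriv f))
    (hμ : μ ^ 2 = l ^ 2) (hode : ∀ x ∈ Icc a b, deriv (deriv f) x = l ^ 2 * f x) :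
    ∀ x ∈ Icc a b, (deriv f x - μ * f x) * Complex.exp (μ * x)
      = (deriv f a - μ * f a) * Complex.exp (μ * a) := by
  refine eq_left_of_deriv_eq_zero_on_Icc (by fun_prop) fun x hx => ?_
  have h : HasDerivAt (fun x : ℝ => (deriv f x - μ * f x) * Complex.exp (μ * x))
      ((deriv (deriv f) x - μ * deriv f x) * Complex.exp (μ * x)
        + (deriv f x - μ * f x) * (μ * Complex.exp (μ * x))) x :=
    ((hf' x).hasDerivAt.sub ((hf x).hasDerivAt.const_mul μ)).mul
      (hasDerivAt_cexp_const_mul_ofReal μ x)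
  rw [h.deriv, hode x hx]
  linear_combination (-(Complex.exp (μ * x) * f x)) * hμ

lemma exists_eqOn_expCombo (hl : l ≠ 0) (hf : Differentiable ℝ f)
    (hf' : Differentiable ℝ (deriv f)) (hode : ∀ x ∈ Icc a b, deriv (deriv f) x = l ^ 2 * f x) :
    ∃ A B : ℂ, EqOn f (expCombo A B l) (Icc a b) ∧
      EqOn (deriv f) (deriv (expCombo A B l)) (Icc a b) := by
  set C₁ := (deriv f a - l * f a) * Complex.exp (l * a)
  set C₂ := (deriv f a + l * f a) * Complex.exp (-(l * a))
  have key : ∀ x ∈ Icc a b, deriv f x + l * f x = C₂ * Complex.exp (l * x) ∧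
      deriv f x - l * f x = C₁ * Complex.exp (-(l * x)) := by
    intro x hx
    have e₁ := deriv_sub_mul_mul_cexp_eq hf hf' rfl hode x hx
    have e₂ := deriv_sub_mul_mul_cexp_eq hf hf' (neg_sq l) hode x hx
    have hexp : Complex.exp (l * x) * Complex.exp (-(l * x)) = 1 := by
      rw [← Complex.exp_add, add_neg_cancel, Complex.exp_zero]
    simp only [neg_mul, sub_neg_eq_add] at e₂
    constructor
    · linear_combination Complex.exp (l * x) * e₂ - (deriv f x + l * f x) * hexp
    · linear_combination Complex.exp (-(l * x)) * e₁ - (deriv f x - l * f x) * hexp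
  have h2l : (2 : ℂ) * l ≠ 0 := mul_ne_zero two_ne_zero hl
  refine ⟨C₂ / (2 * l), -C₁ / (2 * l), fun x hx => ?_, fun x hx => ?_⟩
  · simp only [expCombo]
    field_simp
    linear_combination (key x hx).1 - (key x hx).2
  · simp only [deriv_expCombo, expCombo]
    field_simp
    linear_combination (key x hx).1 + (key x hx).2

end SecondOrder

noncomputable def tipMassEigenfunction (γ β : ℝ) (l : ℂ) : ℝ → ℂ :=
  expCombo ((1 + γ) * l + β) ((1 - γ) * l - β) l

section TipMass

variable {m β γ : ℝ} {l : ℂ} {f : ℝ → ℂ}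

lemma tipMassEigenfunction_apply_zero : tipMassEigenfunction γ β l 0 = 2 * l := by
  simp only [tipMassEigenfunction, expCombo, Complex.ofReal_zero, mul_zero, neg_zero,
    Complex.exp_zero]
  ring

lemma deriv_tipMassEigenfunction_zero :
    deriv (tipMassEigenfunction γ β l) 0 = (γ * l + β) * tipMassEigenfunction γ β l 0 := by
  simp only [tipMassEigenfunction, deriv_expCombo, expCombo, Complex.ofReal_zero, mul_zero,
    neg_zero, Complex.exp_zero]
  ring

lemma deriv_tipMassEigenfunction_one_add :
    deriv (tipMassEigenfunction γ β l) 1 + m * l ^ 2 * tipMassEigenfunction γ β l 1 =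
      l * Complex.exp (-l) * (Complex.exp (2 * l) * ((1 + γ) * l + β) * (1 + m * l)
        - ((1 - γ) * l - β) * (1 - m * l)) := by
  have hexp : Complex.exp (2 * l) * Complex.exp (-l) = Complex.exp l := by
    rw [← Complex.exp_add]; ring_nf
  simp only [tipMassEigenfunction, deriv_expCombo, expCombo, Complex.ofReal_one, mul_one]
  linear_combination (-(l * ((1 + γ) * l + β) * (1 + m * l))) * hexp

lemma deriv_tipMassEigenfunction_one_add_eq_zero_iff (hl : l ≠ 0) :
    deriv (tipMassEigenfunction γ β l) 1 + m * l ^ 2 * tipMassEigenfunction γ β l 1 = 0 ↔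
      Complex.exp (2 * l) * ((1 + γ) * l + β) * (1 + m * l)
        = ((1 - γ) * l - β) * (1 - m * l) := by
  rw [deriv_tipMassEigenfunction_one_add, mul_eq_zero, sub_eq_zero,
    or_iff_right (mul_ne_zero hl (Complex.exp_ne_zero _))]

lemma ne_zero_of_characteristic_eq (hβ : (β : ℂ) ≠ 0)
    (hchar : Complex.exp (2 * l) * ((1 + γ) * l + β) * (1 + m * l)
      = ((1 - γ) * l - β) * (1 - m * l)) : l ≠ 0 := by
  rintro rfl
  simp only [mul_zero, Complex.exp_zero, zero_add, zero_sub, add_zero, sub_zero, mul_one,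
    one_mul] at hchar
  exact hβ (by linear_combination hchar / 2)

lemma tipMassEigenfunction_eigenvalue_zero : tipMassEigenfunction γ β 0 = 0 := by
  funext x
  simp [tipMassEigenfunction, expCombo]

lemma eqOn_zero_of_eigenvalue_zero (hβ : (β : ℂ) ≠ 0) (hf : ContDiff ℝ 2 f)
    (hode : ∀ x ∈ Icc (0 : ℝ) 1, deriv (deriv f) x = 0) (h₀ : deriv f 0 = β * f 0)
    (h₁ : deriv f 1 = 0) : EqOn f 0 (Icc 0 1) ∧ EqOn (deriv f) 0 (Icc 0 1) := by
  have hf' : EqOn (deriv f) 0 (Icc 0 1) := fun x hx => by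
    have hconst := eq_left_of_deriv_eq_zero_on_Icc hf.differentiable_deriv_two hode
    rw [hconst x hx, ← hconst 1 (right_mem_Icc.2 zero_le_one), h₁, Pi.zero_apply]
  have hf0 : f 0 = 0 := by
    simpa [hf' (left_mem_Icc.2 zero_le_one), hβ] using h₀
  refine ⟨fun x hx => ?_, hf'⟩
  rw [eq_left_of_deriv_eq_zero_on_Icc (hf.differentiable two_ne_zero) hf' x hx, hf0, Pi.zero_apply]

lemma exists_eqOn_smul_tipMassEigenfunction (hβ : (β : ℂ) ≠ 0) (hf : ContDiff ℝ 2 f)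
    (hode : ∀ x ∈ Icc (0 : ℝ) 1, deriv (deriv f) x = l ^ 2 * f x)
    (h₀ : deriv f 0 = (γ * l + β) * f 0) (h₁ : deriv f 1 + m * l ^ 2 * f 1 = 0) :
    ∃ c : ℂ, EqOn f (c • tipMassEigenfunction γ β l) (Icc 0 1) ∧
      EqOn (deriv f) (c • deriv (tipMassEigenfunction γ β l)) (Icc 0 1) := by
  rcases eq_or_ne l 0 with rfl | hl
  · obtain ⟨hf0, hf'0⟩ := eqOn_zero_of_eigenvalue_zero hβ hf (by simpa using hode)
      (by simpa using h₀) (by simpa using h₁)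
    exact ⟨0, by simpa using hf0, by simpa using hf'0⟩
  obtain ⟨A, B, hfAB, hf'AB⟩ :=
    exists_eqOn_expCombo hl (hf.differentiable two_ne_zero) hf.differentiable_deriv_two hode
  have hAB : A * ((1 - γ) * l - β) = B * ((1 + γ) * l + β) := by
    have e := hfAB (left_mem_Icc.2 zero_le_one)
    have e' := hf'AB (left_mem_Icc.2 zero_le_one)
    simp only [deriv_expCombo, expCombo, Complex.ofReal_zero, mul_zero, neg_zero,
      Complex.exp_zero, mul_one] at e e'
    rw [e, e'] at h₀
    linear_combination h₀
  have hPQ : (1 + γ) * l + β ≠ 0 ∨ (1 - γ) * l - β ≠ 0 := by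
    by_contra! h
    exact hl (by linear_combination (h.1 + h.2) / 2)
  obtain ⟨c, rfl, rfl⟩ := exists_eq_mul_and_eq_mul_of_mul_eq_mul hPQ hAB
  rw [expCombo_mul_mul] at hfAB hf'AB
  refine ⟨c, hfAB, fun x hx => ?_⟩
  rw [hf'AB hx,
    deriv_const_smul c ((contDiff_expCombo _ _ _ (n := 1)).differentiable one_ne_zero x)]
  rfl

end TipMass

theorem stmt0_general (m β γ : ℝ) (hβ : 0 < β) (l : ℂ) :
    ((∃ f : ℝ → ℂ, ContDiff ℝ 2 f ∧
        (∃ x ∈ Icc (0:ℝ) 1, f x ≠ 0) ∧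
        (∀ x ∈ Ioo (0:ℝ) 1, deriv (deriv f) x = l ^ 2 * f x) ∧
        deriv f 0 = (γ * l + β) * f 0 ∧
        deriv f 1 + m * l ^ 2 * f 1 = 0) ↔
      Complex.exp (2 * l) * ((1 + γ) * l + β) * (1 + m * l)
        = ((1 - γ) * l - β) * (1 - m * l)) ∧
    (∀ f : ℝ → ℂ, ContDiff ℝ 2 f →
        (∀ x ∈ Ioo (0:ℝ) 1, deriv (deriv f) x = l ^ 2 * f x) →
        deriv f 0 = (γ * l + β) * f 0 →
        deriv f 1 + m * l ^ 2 * f 1 = 0 →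
        ∃ c : ℂ, ∀ x ∈ Icc (0:ℝ) 1,
          f x = c * (((1 + γ) * l + β) * Complex.exp (l * x)
            + ((1 - γ) * l - β) * Complex.exp (-(l * x)))) := by
  have hβ' : (β : ℂ) ≠ 0 := Complex.ofReal_ne_zero.2 hβ.ne'
  have hodeIcc (f : ℝ → ℂ) (hf : ContDiff ℝ 2 f)
      (hode : ∀ x ∈ Ioo (0:ℝ) 1, deriv (deriv f) x = l ^ 2 * f x) :
      ∀ x ∈ Icc (0:ℝ) 1, deriv (deriv f) x = l ^ 2 * f x :=
    eqOn_Icc_of_eqOn_Ioo (ContDiff.deriv' (n := 1) hf).continuous_deriv_one (by fun_prop)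
      zero_ne_one hode
  refine ⟨⟨?_, fun hchar => ?_⟩, fun f hf hode h₀ h₁ => ?_⟩
  · rintro ⟨f, hf, ⟨x₀, hx₀, hfx₀⟩, hode, h₀, h₁⟩
    obtain ⟨c, hfc, hf'c⟩ :=
      exists_eqOn_smul_tipMassEigenfunction hβ' hf (hodeIcc f hf hode) h₀ h₁
    have hcx₀ : c * tipMassEigenfunction γ β l x₀ ≠ 0 := by rwa [hfc hx₀] at hfx₀
    have hl : l ≠ 0 := by
      rintro rfl
      simp [tipMassEigenfunction_eigenvalue_zero] at hcx₀
    have hbc : c * (deriv (tipMassEigenfunction γ β l) 1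
        + m * l ^ 2 * tipMassEigenfunction γ β l 1) = 0 := by
      rw [← h₁, hfc (right_mem_Icc.2 zero_le_one), hf'c (right_mem_Icc.2 zero_le_one)]
      simp only [Pi.smul_apply, smul_eq_mul]
      ring
    exact (deriv_tipMassEigenfunction_one_add_eq_zero_iff hl).1
      ((mul_eq_zero.1 hbc).resolve_left (left_ne_zero_of_mul hcx₀))
  · have hl := ne_zero_of_characteristic_eq hβ' hchar
    refine ⟨tipMassEigenfunction γ β l, contDiff_expCombo _ _ _,
      ⟨0, left_mem_Icc.2 zero_le_one, ?_⟩, fun x _ => deriv_deriv_expCombo _ _ _ x,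
      deriv_tipMassEigenfunction_zero, (deriv_tipMassEigenfunction_one_add_eq_zero_iff hl).2 hchar⟩
    rw [tipMassEigenfunction_apply_zero]
    exact mul_ne_zero two_ne_zero hl
  · obtain ⟨c, hfc, -⟩ :=
      exists_eqOn_smul_tipMassEigenfunction hβ' hf (hodeIcc f hf hode) h₀ h₁
    exact ⟨c, hfc⟩

/-- eigenvalue problem for the operator A₂:
`f'' = λ²f` on `(0,1)`, `f'(0) = (γλ+β)f(0)`, `f'(1) + mλ²f(1) = 0`.
A nonzero C² solution exists iff the characteristic equation
`e^{2λ}((1+γ)λ+β)(1+mλ) = ((1-γ)λ-β)(1-mλ)` holds, and every solution is a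
scalar multiple of `f_λ(x) = ((1+γ)λ+β)e^{λx} + ((1-γ)λ-β)e^{-λx}`. -/
theorem stmt0 (m β γ : ℝ) (hm : 0 < m) (hβ : 0 < β) (hγ : 0 < γ) (l : ℂ) :
    ((∃ f : ℝ → ℂ, ContDiff ℝ 2 f ∧
        (∃ x ∈ Icc (0:ℝ) 1, f x ≠ 0) ∧
        (∀ x ∈ Ioo (0:ℝ) 1, deriv (deriv f) x = l ^ 2 * f x) ∧
        deriv f 0 = (γ * l + β) * f 0 ∧
        deriv f 1 + m * l ^ 2 * f 1 = 0) ↔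
      Complex.exp (2 * l) * ((1 + γ) * l + β) * (1 + m * l)
        = ((1 - γ) * l - β) * (1 - m * l)) ∧
    (∀ f : ℝ → ℂ, ContDiff ℝ 2 f →
        (∀ x ∈ Ioo (0:ℝ) 1, deriv (deriv f) x = l ^ 2 * f x) →
        deriv f 0 = (γ * l + β) * f 0 →
        deriv f 1 + m * l ^ 2 * f 1 = 0 →
        ∃ c : ℂ, ∀ x ∈ Icc (0:ℝ) 1,
          f x = c * (((1 + γ) * l + β) * Complex.exp (l * x)
            + ((1 - γ) * l - β) * Complex.exp (-(l * x)))) :=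
  stmt0_general m β γ hβ l
end

section
/- Let m, β, γ > 0 be real constants. Every λ ∈ ℂ satisfying the characteristic equation e^{2λ}((1+γ)λ + β)(1 + mλ) = ((1−γ)λ − β)(1 − mλ) has strictly negative real part: Re λ < 0. -/
/-! If `Re λ ≥ 0` and `λ ≠ 0`, then `|(1+γ)λ+β| > |(1-γ)λ-β|` and `|1+mλ| ≥ |1-mλ| > 0`,
because `‖u + v‖² - ‖u - v‖² = 4 Re (u v̄)`; with `|e^{2λ}| ≥ 1` the left side of the
characteristic equation is strictly larger in modulus than the right side. At `λ = 0` the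
equation reads `β = -β`. -/

open ComplexConjugate

namespace Complex

theorem sq_norm_add_sub_sq_norm_sub (u v : ℂ) :
    ‖u + v‖ ^ 2 - ‖u - v‖ ^ 2 = 4 * (u * conj v).re := by
  rw [Complex.sq_norm, Complex.sq_norm, normSq_add, normSq_sub]
  ring

theorem norm_sub_lt_norm_add_iff (u v : ℂ) : ‖u - v‖ < ‖u + v‖ ↔ 0 < (u * conj v).re := by
  rw [← pow_lt_pow_iff_left₀ (norm_nonneg _) (norm_nonneg _) two_ne_zero]
  constructor <;> intro h <;> linarith [sq_norm_add_sub_sq_norm_sub u v]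

theorem norm_sub_le_norm_add_iff (u v : ℂ) : ‖u - v‖ ≤ ‖u + v‖ ↔ 0 ≤ (u * conj v).re := by
  rw [← pow_le_pow_iff_left₀ (norm_nonneg _) (norm_nonneg _) two_ne_zero]
  constructor <;> intro h <;> linarith [sq_norm_add_sub_sq_norm_sub u v]

theorem exp_mul_mul_ne_mul_of_norm_lt {z a b c d : ℂ} (hz : 0 ≤ z.re) (hba : ‖b‖ < ‖a‖)
    (hdc : ‖d‖ ≤ ‖c‖) (hc : c ≠ 0) : exp z * a * c ≠ b * d := by
  intro h
  have hexp : 1 ≤ ‖exp z‖ := by rw [norm_exp]; exact Real.one_le_exp hz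
  have := congrArg norm h
  rw [norm_mul, norm_mul, norm_mul] at this
  have hcpos : 0 < ‖c‖ := norm_pos_iff.mpr hc
  nlinarith [mul_lt_mul_of_pos_right hba hcpos, mul_le_mul_of_nonneg_left hdc (norm_nonneg b),
    mul_le_mul_of_nonneg_right hexp (mul_nonneg (norm_nonneg a) hcpos.le)]

end Complex

open Complex

variable {l : ℂ}

theorem norm_sub_lt_norm_add_of_re_nonneg {β γ : ℝ} (hβ : 0 < β) (hγ : 0 < γ)
    (hl : 0 ≤ l.re) (hl0 : l ≠ 0) : ‖(1 - γ) * l - β‖ < ‖(1 + γ) * l + β‖ := by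
  have hre : 0 < ((γ * l + β) * conj l).re := by
    have : ((γ * l + β) * conj l).re = γ * normSq l + β * l.re := by
      simp only [mul_re, mul_im, add_re, add_im, ofReal_re, ofReal_im, conj_re, conj_im, normSq_apply]
      ring
    rw [this]
    nlinarith [normSq_pos.mpr hl0]
  have := (norm_sub_lt_norm_add_iff (γ * l + β) l).mpr hre
  rwa [← norm_neg, show -(γ * l + β - l) = (1 - γ) * l - β by ring,
    show γ * l + β + l = (1 + γ) * l + β by ring] at this

theorem norm_one_sub_mul_le_norm_one_add_mul {m : ℝ} (hm : 0 ≤ m) (hl : 0 ≤ l.re) :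
    ‖1 - m * l‖ ≤ ‖1 + m * l‖ :=
  (norm_sub_le_norm_add_iff 1 (m * l)).mpr (by simpa using mul_nonneg hm hl)

theorem one_add_mul_ne_zero_of_re_nonneg {m : ℝ} (hm : 0 ≤ m) (hl : 0 ≤ l.re) :
    1 + m * l ≠ 0 := by
  intro h
  have := congrArg re h
  simp only [add_re, one_re, re_ofReal_mul, zero_re] at this
  nlinarith

/-- every root of the characteristic equation
`e^{2λ}((1+γ)λ+β)(1+mλ) = ((1-γ)λ-β)(1-mλ)` (with `m, β, γ > 0`)
has strictly negative real part. -/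
theorem stmt1 (m β γ : ℝ) (hm : 0 < m) (hβ : 0 < β) (hγ : 0 < γ) (l : ℂ)
    (hchar : Complex.exp (2 * l) * ((1 + γ) * l + β) * (1 + m * l)
      = ((1 - γ) * l - β) * (1 - m * l)) :
    l.re < 0 := by
  by_contra! hl
  have hl0 : l ≠ 0 := by
    rintro rfl
    have : (β : ℂ) = -β := by simpa using hchar
    exact hβ.ne' (by exact_mod_cast CharZero.eq_neg_self_iff.mp this)
  exact exp_mul_mul_ne_mul_of_norm_lt (by simpa using hl)
    (norm_sub_lt_norm_add_of_re_nonneg hβ hγ hl hl0)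
    (norm_one_sub_mul_le_norm_one_add_mul hm.le hl) (one_add_mul_ne_zero_of_re_nonneg hm.le hl)
    hchar
end

section
/- Let m, β, γ > 0 be real constants with γ ≠ 1. Set r = |γ−1|/(γ+1), and for each integer n let n_β = n if γ > 1 and n_β = n + 1/2 if 0 < γ < 1, and put μₙ = (1/2)·ln r + n_β π i. Then there exist a natural number N and a constant C > 0 such that for every integer n with |n| ≥ N there exists λₙ ∈ ℂ satisfying e^{2λₙ}((1+γ)λₙ + β)(1 + mλₙ) = ((1−γ)λₙ − β)(1 − mλₙ) and |λₙ − μₙ| ≤ C/|n|. -/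
/-! Write the equation as `exp (2λ) = a · H λ` with `a = (γ - 1) / (γ + 1)` and `H = P / (a Q)`,
where `P` and `Q` are the quadratic right- and left-hand sides; the leading coefficients make
`H = 1 + O(1 / |λ|)`, with Lipschitz constant `O(1 / |λ|²)` for large `|λ|`. Since
`exp (2 μₙ) = a` and `|μₙ| ≥ |n|`, the map `λ ↦ μₙ + (log (H λ)) / 2` is then a contraction of the
closed ball of radius `C / |μₙ|` about `μₙ`, and its fixed point is the root `λₙ`. -/

/-- `n_β = n` if `γ > 1` and `n + 1/2` if `0 < γ < 1`. -/
noncomputable def nbeta (γ : ℝ) (n : ℤ) : ℝ := if 1 < γ then (n : ℝ) else (n : ℝ) + 1 / 2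

/-- `μₙ = (1/2)·ln(|γ-1|/(γ+1)) + n_β π i`. -/
noncomputable def muSeq (γ : ℝ) (n : ℤ) : ℂ :=
  (Real.log (|γ - 1| / (γ + 1)) / 2 : ℝ) + (nbeta γ n * Real.pi : ℝ) * Complex.I

open Complex Metric Set Filter Bornology
open scoped Real

lemma lipschitzOnWith_log_closedBall_one : LipschitzOnWith 2 log (closedBall (1 : ℂ) (1 / 2)) := by
  have hre : ∀ z ∈ closedBall (1 : ℂ) (1 / 2), 1 / 2 ≤ z.re := fun z hz => by
    have := (abs_le.1 ((abs_re_le_norm (z - 1)).trans (mem_closedBall_iff_norm.1 hz))).1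
    simp only [sub_re, one_re] at this
    linarith
  refine (convex_closedBall _ _).lipschitzOnWith_of_nnnorm_hasDerivWithin_le
    (fun z hz => (hasDerivAt_log (Or.inl (by linarith [hre z hz]))).hasDerivWithinAt)
    fun z hz => ?_
  rw [← NNReal.coe_le_coe, coe_nnnorm, norm_inv, NNReal.coe_ofNat,
    inv_le_comm₀ (by linarith [hre z hz, re_le_norm z]) two_pos]
  linarith [hre z hz, re_le_norm z]

theorem exists_exp_two_mul_eq_exp_two_mul_mul {μ : ℂ} {ρ : ℝ} (hρ₀ : 0 ≤ ρ) (hρ : ρ ≤ 1 / 2)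
    {H : ℂ → ℂ} (hH : MapsTo H (closedBall μ ρ) (closedBall 1 ρ))
    (hHlip : LipschitzOnWith (1 / 2) H (closedBall μ ρ)) :
    ∃ z ∈ closedBall μ ρ, exp (2 * z) = exp (2 * μ) * H z := by
  have hlog : ∀ u ∈ closedBall (1 : ℂ) ρ, ∀ v ∈ closedBall (1 : ℂ) ρ,
      ‖log u - log v‖ / 2 ≤ ‖u - v‖ := fun u hu v hv => by
    have := (lipschitzOnWith_log_closedBall_one.mono (closedBall_subset_closedBall hρ)).dist_le_mul
      u hu v hv
    rw [dist_eq, dist_eq, NNReal.coe_ofNat] at this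
    linarith
  set T : ℂ → ℂ := fun z => μ + log (H z) / 2
  have hmaps : MapsTo T (closedBall μ ρ) (closedBall μ ρ) := fun z hz => by
    have := hlog _ (hH hz) 1 (mem_closedBall_self hρ₀)
    rw [log_one, sub_zero] at this
    rw [mem_closedBall_iff_norm, add_sub_cancel_left, norm_div, Complex.norm_two]
    exact this.trans (mem_closedBall_iff_norm.1 (hH hz))
  have hT : LipschitzOnWith (1 / 2) T (closedBall μ ρ) := by
    refine LipschitzOnWith.of_dist_le_mul fun z hz w hw => ?_
    have := hlog _ (hH hz) _ (hH hw)
    rw [dist_eq, add_sub_add_left_eq_sub, ← sub_div, norm_div, Complex.norm_two]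
    exact this.trans (by simpa [dist_eq] using hHlip.dist_le_mul z hz w hw)
  obtain ⟨z, hz, hTz, -⟩ := ContractingWith.exists_fixedPoint' isClosed_closedBall.isComplete
    hmaps ⟨by norm_num, hT.mapsToRestrict hmaps⟩ (mem_closedBall_self hρ₀) (edist_ne_top _ _)
  have hHz : H z ≠ 0 := fun h0 => by
    have := mem_closedBall_iff_norm.1 (hH hz)
    rw [h0, zero_sub, norm_neg, norm_one] at this
    linarith
  refine ⟨z, hz, ?_⟩
  have hfix : 2 * z = 2 * μ + log (H z) := by
    have : T z = z := hTz
    linear_combination -2 * this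
  rw [hfix, exp_add, exp_log hHz]

def quadratic (c₂ c₁ c₀ z : ℂ) : ℂ := c₂ * z ^ 2 + c₁ * z + c₀

lemma norm_mul_add_le_of_one_le_norm (c₁ c₀ : ℂ) {z : ℂ} (hz : 1 ≤ ‖z‖) :
    ‖c₁ * z + c₀‖ ≤ (‖c₁‖ + ‖c₀‖) * ‖z‖ := by
  calc ‖c₁ * z + c₀‖ ≤ ‖c₁‖ * ‖z‖ + ‖c₀‖ := by simpa only [norm_mul] using norm_add_le (c₁ * z) c₀
    _ ≤ (‖c₁‖ + ‖c₀‖) * ‖z‖ := by nlinarith [norm_nonneg c₀]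

lemma le_norm_quadratic {c₂ c₁ c₀ z : ℂ} (hz : 1 ≤ ‖z‖)
    (hlarge : 2 * (‖c₁‖ + ‖c₀‖) ≤ ‖c₂‖ * ‖z‖) :
    ‖c₂‖ / 2 * ‖z‖ ^ 2 ≤ ‖quadratic c₂ c₁ c₀ z‖ := by
  have htri := norm_sub_norm_le (c₂ * z ^ 2) (-(c₁ * z + c₀))
  rw [norm_neg, sub_neg_eq_add, ← add_assoc, norm_mul, norm_pow] at htri
  have hlin := norm_mul_add_le_of_one_le_norm c₁ c₀ hz
  unfold quadratic
  nlinarith [norm_nonneg z]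

lemma quadratic_sub_mul_quadratic (a q₂ q₁ q₀ p₁ p₀ z : ℂ) :
    quadratic (a * q₂) p₁ p₀ z - a * quadratic q₂ q₁ q₀ z = (p₁ - a * q₁) * z + (p₀ - a * q₀) := by
  unfold quadratic
  ring

lemma quadratic_mul_quadratic_sub (p₂ p₁ p₀ q₂ q₁ q₀ z w : ℂ) :
    quadratic p₂ p₁ p₀ z * quadratic q₂ q₁ q₀ w - quadratic p₂ p₁ p₀ w * quadratic q₂ q₁ q₀ z
      = (w - z) * ((p₀ * q₁ - p₁ * q₀) + (p₀ * q₂ - p₂ * q₀) * (z + w)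
          + (p₁ * q₂ - p₂ * q₁) * (z * w)) := by
  unfold quadratic
  ring

lemma norm_add_mul_add_add_mul_mul_le (A B D : ℂ) {z w : ℂ} (hz : 1 ≤ ‖z‖) (hw : 1 ≤ ‖w‖) :
    ‖A + B * (z + w) + D * (z * w)‖ ≤ (‖A‖ + 2 * ‖B‖ + ‖D‖) * (‖z‖ * ‖w‖) := by
  calc ‖A + B * (z + w) + D * (z * w)‖ ≤ ‖A‖ + ‖B‖ * (‖z‖ + ‖w‖) + ‖D‖ * (‖z‖ * ‖w‖) := by
        refine (norm_add₃_le ..).trans ?_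
        simp only [norm_mul]
        gcongr
        exact norm_add_le z w
    _ ≤ (‖A‖ + 2 * ‖B‖ + ‖D‖) * (‖z‖ * ‖w‖) := by
        have hzw : ‖z‖ ≤ ‖z‖ * ‖w‖ := le_mul_of_one_le_right (norm_nonneg z) hw
        have hwz : ‖w‖ ≤ ‖z‖ * ‖w‖ := le_mul_of_one_le_left (norm_nonneg w) hz
        nlinarith [mul_le_mul_of_nonneg_left hzw (norm_nonneg B),
          mul_le_mul_of_nonneg_left hwz (norm_nonneg B),
          mul_le_mul_of_nonneg_left (hz.trans hzw) (norm_nonneg A)]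

lemma norm_quadratic_mul_quadratic_sub_le (p₂ p₁ p₀ q₂ q₁ q₀ : ℂ) {z w : ℂ} (hz : 1 ≤ ‖z‖)
    (hw : 1 ≤ ‖w‖) :
    ‖quadratic p₂ p₁ p₀ z * quadratic q₂ q₁ q₀ w - quadratic p₂ p₁ p₀ w * quadratic q₂ q₁ q₀ z‖
      ≤ (‖p₀ * q₁ - p₁ * q₀‖ + 2 * ‖p₀ * q₂ - p₂ * q₀‖ + ‖p₁ * q₂ - p₂ * q₁‖)
          * ‖z - w‖ * (‖z‖ * ‖w‖) := by
  rw [quadratic_mul_quadratic_sub, norm_mul, norm_sub_rev, mul_comm, mul_right_comm]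
  gcongr
  exact norm_add_mul_add_add_mul_mul_le _ _ _ hz hw

lemma norm_div_mul_sub_one_le {a p q z : ℂ} {c K r : ℝ} (ha : a ≠ 0) (hc : 0 < c) (hK : 0 ≤ K)
    (hr : 0 < r) (hz : r ≤ ‖z‖) (hq : c * ‖z‖ ^ 2 ≤ ‖q‖) (hp : ‖p - a * q‖ ≤ K * ‖z‖) :
    ‖p / (a * q) - 1‖ ≤ K / (‖a‖ * c * r) := by
  have hz0 : 0 < ‖z‖ := hr.trans_le hz
  have hq0 : q ≠ 0 := norm_pos_iff.1 ((by positivity : 0 < c * ‖z‖ ^ 2).trans_le hq)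
  rw [div_sub_one (mul_ne_zero ha hq0), norm_div, norm_mul]
  calc ‖p - a * q‖ / (‖a‖ * ‖q‖) ≤ K * ‖z‖ / (‖a‖ * (c * ‖z‖ ^ 2)) := by
        gcongr
    _ = K / (‖a‖ * c * ‖z‖) := by
        field_simp
    _ ≤ K / (‖a‖ * c * r) := by
        gcongr

lemma norm_div_mul_sub_div_mul_le {a p q p' q' z w : ℂ} {c K r : ℝ} (ha : a ≠ 0) (hc : 0 < c)
    (hK : 0 ≤ K) (hr : 0 < r) (hz : r ≤ ‖z‖) (hw : r ≤ ‖w‖) (hq : c * ‖z‖ ^ 2 ≤ ‖q‖)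
    (hq' : c * ‖w‖ ^ 2 ≤ ‖q'‖) (hp : ‖p * q' - p' * q‖ ≤ K * ‖z - w‖ * (‖z‖ * ‖w‖)) :
    ‖p / (a * q) - p' / (a * q')‖ ≤ K / (‖a‖ * c ^ 2 * r ^ 2) * ‖z - w‖ := by
  have hz0 : 0 < ‖z‖ := hr.trans_le hz
  have hw0 : 0 < ‖w‖ := hr.trans_le hw
  have hq0 : q ≠ 0 := norm_pos_iff.1 ((by positivity : 0 < c * ‖z‖ ^ 2).trans_le hq)
  have hq0' : q' ≠ 0 := norm_pos_iff.1 ((by positivity : 0 < c * ‖w‖ ^ 2).trans_le hq')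
  have hid : p / (a * q) - p' / (a * q') = (p * q' - p' * q) / (a * (q * q')) := by
    field_simp
  rw [hid, norm_div, norm_mul, norm_mul]
  calc ‖p * q' - p' * q‖ / (‖a‖ * (‖q‖ * ‖q'‖))
        ≤ K * ‖z - w‖ * (‖z‖ * ‖w‖) / (‖a‖ * ((c * ‖z‖ ^ 2) * (c * ‖w‖ ^ 2))) := by
        gcongr
    _ = K / (‖a‖ * c ^ 2 * (‖z‖ * ‖w‖)) * ‖z - w‖ := by
        field_simp
    _ ≤ K / (‖a‖ * c ^ 2 * r ^ 2) * ‖z - w‖ := by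
        gcongr
        nlinarith

theorem exists_root_mem_closedBall {P Q : ℂ → ℂ} {a : ℂ} {c K₁ K₂ R₀ : ℝ}
    (hc : 0 < c) (hK₁ : 0 ≤ K₁) (hK₂ : 0 ≤ K₂)
    (hQ : ∀ z, R₀ ≤ ‖z‖ → c * ‖z‖ ^ 2 ≤ ‖Q z‖)
    (hPQ : ∀ z, R₀ ≤ ‖z‖ → ‖P z - a * Q z‖ ≤ K₁ * ‖z‖)
    (hcross : ∀ z w, R₀ ≤ ‖z‖ → R₀ ≤ ‖w‖ →
      ‖P z * Q w - P w * Q z‖ ≤ K₂ * ‖z - w‖ * (‖z‖ * ‖w‖))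
    {μ : ℂ} (hexp : exp (2 * μ) = a) {ρ r : ℝ} (hρ : ρ ≤ 1 / 2) (hr : 0 < r) (hR₀r : R₀ ≤ r)
    (hμr : r + ρ ≤ ‖μ‖) (hK₁ρ : K₁ / (‖a‖ * c * r) ≤ ρ) (hK₂r : 2 * K₂ ≤ ‖a‖ * c ^ 2 * r ^ 2) :
    ∃ z ∈ closedBall μ ρ, exp (2 * z) * Q z = P z := by
  have ha : a ≠ 0 := hexp ▸ exp_ne_zero _
  have hρ₀ : 0 ≤ ρ := le_trans (by positivity) hK₁ρ
  have hball : ∀ z ∈ closedBall μ ρ, r ≤ ‖z‖ := fun z hz => by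
    linarith [norm_sub_norm_le μ z, (mem_closedBall_iff_norm'.1 hz)]
  have hmaps : MapsTo (fun z => P z / (a * Q z)) (closedBall μ ρ) (closedBall 1 ρ) := by
    intro z hz
    have hzR₀ := hR₀r.trans (hball z hz)
    exact mem_closedBall_iff_norm.2 <| hK₁ρ.trans' <|
      norm_div_mul_sub_one_le ha hc hK₁ hr (hball z hz) (hQ z hzR₀) (hPQ z hzR₀)
  have hlip : LipschitzOnWith (1 / 2) (fun z => P z / (a * Q z)) (closedBall μ ρ) := by
    refine LipschitzOnWith.of_dist_le_mul fun z hz w hw => ?_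
    have hzR₀ := hR₀r.trans (hball z hz)
    have hwR₀ := hR₀r.trans (hball w hw)
    rw [dist_eq, dist_eq]
    refine (norm_div_mul_sub_div_mul_le ha hc hK₂ hr (hball z hz) (hball w hw) (hQ z hzR₀)
      (hQ w hwR₀) (hcross z w hzR₀ hwR₀)).trans ?_
    gcongr
    rw [one_div, NNReal.coe_inv, NNReal.coe_ofNat, div_le_iff₀ (by positivity)]
    linarith
  obtain ⟨z, hz, hzexp⟩ := exists_exp_two_mul_eq_exp_two_mul_mul hρ₀ hρ hmaps hlip
  have hQz : Q z ≠ 0 := norm_pos_iff.1 <|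
    (mul_pos hc (pow_pos (hr.trans_le (hball z hz)) 2)).trans_le (hQ z (hR₀r.trans (hball z hz)))
  refine ⟨z, hz, ?_⟩
  rw [hzexp, hexp]
  field_simp

theorem exists_pos_eventually_exists_root_near {P Q : ℂ → ℂ} {a : ℂ} {c K₁ K₂ R₀ : ℝ}
    (hc : 0 < c) (hK₁ : 0 ≤ K₁) (hK₂ : 0 ≤ K₂)
    (hQ : ∀ z, R₀ ≤ ‖z‖ → c * ‖z‖ ^ 2 ≤ ‖Q z‖)
    (hPQ : ∀ z, R₀ ≤ ‖z‖ → ‖P z - a * Q z‖ ≤ K₁ * ‖z‖)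
    (hcross : ∀ z w, R₀ ≤ ‖z‖ → R₀ ≤ ‖w‖ →
      ‖P z * Q w - P w * Q z‖ ≤ K₂ * ‖z - w‖ * (‖z‖ * ‖w‖)) :
    ∃ C > 0, ∀ᶠ μ in cobounded ℂ, exp (2 * μ) = a →
      ∃ z, exp (2 * z) * Q z = P z ∧ ‖z - μ‖ ≤ C / ‖μ‖ := by
  set C := 2 * K₁ / (‖a‖ * c) + 1
  refine ⟨C, by positivity, ?_⟩
  set M := max (max R₀ 1) (max C (2 * K₂ / (‖a‖ * c ^ 2)))
  filter_upwards [eventually_cobounded_le_norm (2 * M)] with μ hμ hexp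
  have hlarge : M ≤ ‖μ‖ / 2 := by linarith
  simp only [M, max_le_iff] at hlarge
  obtain ⟨⟨hR₀, h1⟩, hC, hK₂μ⟩ := hlarge
  have hac : 0 < ‖a‖ * c ^ 2 := by
    have : a ≠ 0 := hexp ▸ exp_ne_zero _
    positivity
  have hμ : 0 < ‖μ‖ := by linarith
  have hρ : C / ‖μ‖ ≤ 1 / 2 := by
    rw [div_le_iff₀ hμ]
    linarith
  have hK₁ρ : K₁ / (‖a‖ * c * (‖μ‖ / 2)) ≤ C / ‖μ‖ := by
    rw [mul_div_assoc', div_div_eq_mul_div, mul_comm, ← div_div, div_le_div_iff_of_pos_right hμ]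
    linarith
  have hK₂r : 2 * K₂ ≤ ‖a‖ * c ^ 2 * (‖μ‖ / 2) ^ 2 := by
    rw [div_le_iff₀ hac] at hK₂μ
    nlinarith [mul_le_mul_of_nonneg_left h1 (mul_nonneg hac.le (by positivity : 0 ≤ ‖μ‖ / 2))]
  obtain ⟨z, hz, hroot⟩ := exists_root_mem_closedBall hc hK₁ hK₂ hQ hPQ hcross hexp hρ
    (by linarith) hR₀ (by linarith) hK₁ρ hK₂r
  exact ⟨z, hroot, mem_closedBall_iff_norm.1 hz⟩

theorem exists_pos_eventually_exists_root_near_quadratic (a : ℂ) {q₂ : ℂ} (hq₂ : q₂ ≠ 0)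
    (q₁ q₀ p₁ p₀ : ℂ) :
    ∃ C > 0, ∀ᶠ μ in cobounded ℂ, exp (2 * μ) = a →
      ∃ z, exp (2 * z) * quadratic q₂ q₁ q₀ z = quadratic (a * q₂) p₁ p₀ z ∧
        ‖z - μ‖ ≤ C / ‖μ‖ := by
  have hq₂' : 0 < ‖q₂‖ := norm_pos_iff.2 hq₂
  set R₀ := max 1 (2 * (‖q₁‖ + ‖q₀‖) / ‖q₂‖)
  have hR₀ : ∀ z : ℂ, R₀ ≤ ‖z‖ → 1 ≤ ‖z‖ ∧ 2 * (‖q₁‖ + ‖q₀‖) ≤ ‖q₂‖ * ‖z‖ := fun z hz => by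
    rw [max_le_iff, div_le_iff₀ hq₂'] at hz
    exact ⟨hz.1, by linarith⟩
  refine exists_pos_eventually_exists_root_near (K₁ := ‖p₁ - a * q₁‖ + ‖p₀ - a * q₀‖)
    (half_pos hq₂') (by positivity) (by positivity)
    (fun z hz => le_norm_quadratic (hR₀ z hz).1 (hR₀ z hz).2) (fun z hz => ?_)
    (fun z w hz hw => norm_quadratic_mul_quadratic_sub_le _ _ _ _ _ _ (hR₀ z hz).1 (hR₀ w hw).1)
  rw [quadratic_sub_mul_quadratic]
  exact norm_mul_add_le_of_one_le_norm _ _ (hR₀ z hz).1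

lemma exp_two_mul_muSeq {γ : ℝ} (hγ : 0 < γ) (hγ1 : γ ≠ 1) (n : ℤ) :
    exp (2 * muSeq γ n) = (γ - 1) / (γ + 1) := by
  have hr : 0 < |γ - 1| / (γ + 1) := div_pos (abs_pos.2 (sub_ne_zero.2 hγ1)) (by linarith)
  have hγ' : (γ : ℂ) + 1 ≠ 0 := by exact_mod_cast (by linarith : γ + 1 ≠ 0)
  have h2μ : 2 * muSeq γ n = Real.log (|γ - 1| / (γ + 1)) + (2 * nbeta γ n) * π * I := by
    simp only [muSeq]
    push_cast
    ring
  rw [h2μ, exp_add, ← ofReal_exp, Real.exp_log hr]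
  rcases lt_or_gt_of_ne hγ1 with hlt | hgt
  · have hnb : 2 * nbeta γ n * π * I = n * (2 * π * I) + π * I := by
      simp only [nbeta, if_neg (not_lt.2 hlt.le)]
      push_cast
      ring
    rw [hnb, exp_add, exp_int_mul_two_pi_mul_I, exp_pi_mul_I, abs_of_neg (by linarith)]
    push_cast
    field_simp
  · have hnb : 2 * nbeta γ n * π * I = n * (2 * π * I) := by
      simp only [nbeta, if_pos hgt]
      push_cast
      ring
    rw [hnb, exp_int_mul_two_pi_mul_I, abs_of_pos (by linarith)]
    push_cast
    ring

lemma abs_le_norm_muSeq (γ : ℝ) {n : ℤ} (hn : 1 ≤ |(n : ℝ)|) : |(n : ℝ)| ≤ ‖muSeq γ n‖ := by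
  have him : (muSeq γ n).im = nbeta γ n * π := by simp [muSeq]
  have hnb : |(n : ℝ)| - 1 / 2 ≤ |nbeta γ n| := by
    unfold nbeta
    split_ifs
    · linarith
    · rcases abs_cases (n : ℝ) with h | h <;> rcases abs_cases ((n : ℝ) + 1 / 2) with h' | h' <;>
        linarith
  calc |(n : ℝ)| ≤ |nbeta γ n| * π := by nlinarith [Real.pi_gt_three, abs_nonneg (nbeta γ n)]
    _ = |(muSeq γ n).im| := by rw [him, abs_mul, abs_of_pos Real.pi_pos]
    _ ≤ ‖muSeq γ n‖ := abs_im_le_norm _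

theorem stmt2_general (m β γ : ℝ) (hm : 0 < m) (hγ : 0 < γ) (hγ1 : γ ≠ 1) :
    ∃ (N : ℕ) (C : ℝ), 0 < C ∧
      ∀ n : ℤ, (N : ℤ) ≤ |n| →
        ∃ l : ℂ,
          Complex.exp (2 * l) * ((1 + γ) * l + β) * (1 + m * l)
            = ((1 - γ) * l - β) * (1 - m * l) ∧
          ‖l - muSeq γ n‖ ≤ C / |(n : ℝ)| := by
  have hγ' : (γ : ℂ) + 1 ≠ 0 := by exact_mod_cast (by linarith : γ + 1 ≠ 0)
  have hq₂ : ((1 + γ) * m : ℂ) ≠ 0 := by exact_mod_cast (by positivity : (1 + γ) * m ≠ 0)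
  obtain ⟨C, hC, hroots⟩ := exists_pos_eventually_exists_root_near_quadratic ((γ - 1) / (γ + 1))
    hq₂ (1 + γ + β * m) β (1 - γ + β * m) (-β)
  obtain ⟨R, -, hR⟩ := hasBasis_cobounded_norm.eventually_iff.1 hroots
  refine ⟨max 1 ⌈R⌉₊, C, hC, fun n hn => ?_⟩
  have hn' : max 1 ⌈R⌉₊ ≤ |(n : ℝ)| := by exact_mod_cast hn
  rw [Nat.cast_max, max_le_iff, Nat.cast_one] at hn'
  have hμ := abs_le_norm_muSeq γ hn'.1
  obtain ⟨l, hl, hdist⟩ := hR ((Nat.le_ceil R).trans (hn'.2.trans hμ)) (exp_two_mul_muSeq hγ hγ1 n)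
  refine ⟨l, ?_, hdist.trans (div_le_div_of_nonneg_left hC.le (by linarith) hμ)⟩
  have hlead : ((γ : ℂ) - 1) / (γ + 1) * ((1 + γ) * m) = -(1 - γ) * m := by
    field_simp
    ring
  rw [hlead] at hl
  unfold quadratic at hl
  linear_combination hl

/-- for all large `|n|` the characteristic equation
`e^{2λ}((1+γ)λ+β)(1+mλ) = ((1-γ)λ-β)(1-mλ)` has a root `λₙ`
with `|λₙ - μₙ| ≤ C/|n|`. -/
theorem stmt2 (m β γ : ℝ) (hm : 0 < m) (hβ : 0 < β) (hγ : 0 < γ) (hγ1 : γ ≠ 1) :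
    ∃ (N : ℕ) (C : ℝ), 0 < C ∧
      ∀ n : ℤ, (N : ℤ) ≤ |n| →
        ∃ l : ℂ,
          Complex.exp (2 * l) * ((1 + γ) * l + β) * (1 + m * l)
            = ((1 - γ) * l - β) * (1 - m * l) ∧
          ‖l - muSeq γ n‖ ≤ C / |(n : ℝ)| :=
  stmt2_general m β γ hm hγ hγ1
end

section
/- Let m, β, γ > 0 be real constants with γ ≠ 1. Set r = |γ−1|/(γ+1), n_β = n if γ > 1 and n_β = n + 1/2 if 0 < γ < 1, and μₙ = (1/2)·ln r + n_β π i. Suppose (λₙ)_{n ∈ ℤ} is a sequence of nonzero complex numbers and C₀ > 0 is such that |λₙ − μₙ| ≤ C₀/|n| for all n ≠ 0. Define fₙ(x) = ((1+γ)λₙ + β)e^{λₙ x} + ((1−γ)λₙ − β)e^{−λₙ x}. Then there exist C > 0 and N ∈ ℕ such that for all integers n with |n| ≥ N and all x ∈ [0,1]: |fₙ(x)/λₙ − ((1+γ) r^{x/2} e^{i n_β π x} + (1−γ) r^{−x/2} e^{−i n_β π x})| ≤ C/|n|, |fₙ'(x)/λₙ² − ((1+γ) r^{x/2} e^{i n_β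 π x} − (1−γ) r^{−x/2} e^{−i n_β π x})| ≤ C/|n|, |β fₙ(0)/λₙ²| ≤ C/|n|, and |fₙ'(1)/λₙ³| ≤ C/|n|. -/
/-- The eigenfunction `f_λ(x) = ((1+γ)λ+β)e^{λx} + ((1-γ)λ-β)e^{-λx}`. -/
noncomputable def efun (γ β : ℝ) (l : ℂ) : ℝ → ℂ :=
  fun x => ((1 + γ) * l + β) * Complex.exp (l * x) + ((1 - γ) * l - β) * Complex.exp (-(l * x))

/-! Re μₙ = ½ ln r does not depend on n and ‖λₙ − μₙ‖ ≤ C₀/|n|, so for x ∈ [0,1] the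
exponentials e^{±λₙx} are bounded uniformly in n and differ from e^{±μₙx} by O(1/|n|), while
|λₙ| ≥ |Im λₙ| ≥ |n| once |n| ≥ 2. The limits are exactly (1+γ)e^{μₙx} ± (1−γ)e^{−μₙx}, and
fₙ/λₙ, fₙ'/λₙ² differ from them by such exponential differences plus β/λₙ times bounded terms;
finally fₙ(0) = 2λₙ. -/

open scoped Complex

section Exponential

variable {L μ : ℂ} {x : ℝ}

lemma re_mul_ofReal_le_abs_re (z : ℂ) (hx : x ∈ Set.Icc (0 : ℝ) 1) : (z * x).re ≤ |z.re| := by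
  rw [Complex.re_mul_ofReal]
  calc z.re * x ≤ |z.re| * x := mul_le_mul_of_nonneg_right (le_abs_self _) hx.1
    _ ≤ |z.re| := mul_le_of_le_one_right (abs_nonneg _) hx.2

lemma norm_cexp_mul_ofReal_le (z : ℂ) (hx : x ∈ Set.Icc (0 : ℝ) 1) :
    ‖cexp (z * x)‖ ≤ Real.exp |z.re| := by
  rw [Complex.norm_exp]
  exact Real.exp_le_exp.2 (re_mul_ofReal_le_abs_re z hx)

lemma norm_cexp_neg_mul_ofReal_le (z : ℂ) (hx : x ∈ Set.Icc (0 : ℝ) 1) :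
    ‖cexp (-(z * x))‖ ≤ Real.exp |z.re| := by
  simpa [neg_mul] using norm_cexp_mul_ofReal_le (-z) hx

lemma norm_cexp_sub_cexp_le {a b : ℂ} (h : ‖a - b‖ ≤ 1) :
    ‖cexp a - cexp b‖ ≤ 2 * Real.exp b.re * ‖a - b‖ := by
  have hfactor : cexp a - cexp b = cexp b * (cexp (a - b) - 1) := by
    rw [mul_sub, mul_one, ← Complex.exp_add, add_sub_cancel]
  rw [hfactor, norm_mul, Complex.norm_exp]
  calc Real.exp b.re * ‖cexp (a - b) - 1‖ ≤ Real.exp b.re * (2 * ‖a - b‖) := by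
        gcongr; exact Complex.norm_exp_sub_one_le h
    _ = 2 * Real.exp b.re * ‖a - b‖ := by ring

lemma norm_cexp_mul_ofReal_sub_le (h : ‖L - μ‖ ≤ 1) (hx : x ∈ Set.Icc (0 : ℝ) 1) :
    ‖cexp (L * x) - cexp (μ * x)‖ ≤ 2 * Real.exp |μ.re| * ‖L - μ‖ := by
  have hδ : ‖L * x - μ * x‖ ≤ ‖L - μ‖ := by
    rw [← sub_mul, norm_mul, Complex.norm_real, Real.norm_of_nonneg hx.1]
    exact mul_le_of_le_one_right (norm_nonneg _) hx.2
  calc ‖cexp (L * x) - cexp (μ * x)‖ ≤ 2 * Real.exp (μ * x).re * ‖L * x - μ * x‖ :=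
        norm_cexp_sub_cexp_le (hδ.trans h)
    _ ≤ 2 * Real.exp |μ.re| * ‖L - μ‖ := by
        gcongr
        exact re_mul_ofReal_le_abs_re μ hx

lemma norm_cexp_neg_mul_ofReal_sub_le (h : ‖L - μ‖ ≤ 1) (hx : x ∈ Set.Icc (0 : ℝ) 1) :
    ‖cexp (-(L * x)) - cexp (-(μ * x))‖ ≤ 2 * Real.exp |μ.re| * ‖L - μ‖ := by
  have h' : ‖-L - -μ‖ ≤ 1 := by rwa [neg_sub_neg, norm_sub_rev]
  simpa [neg_mul, neg_add_eq_sub, norm_sub_rev] using norm_cexp_mul_ofReal_sub_le h' hx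

lemma abs_re_le_of_norm_sub_le_one (h : ‖L - μ‖ ≤ 1) : |L.re| ≤ |μ.re| + 1 := by
  have hre : |(L - μ).re| ≤ 1 := (Complex.abs_re_le_norm _).trans h
  rw [Complex.sub_re] at hre
  linarith [abs_sub_abs_le_abs_sub L.re μ.re]

end Exponential

section Eigenfunction

variable {γ β : ℝ} {L μ : ℂ} {x : ℝ}

lemma hasDerivAt_efun (γ β : ℝ) (l : ℂ) (x : ℝ) :
    HasDerivAt (efun γ β l)
      (l * (((1 + γ) * l + β) * cexp (l * x) - ((1 - γ) * l - β) * cexp (-(l * x)))) x := by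
  have hexp : HasDerivAt (fun z : ℂ => cexp (l * z)) (cexp (l * x) * l) x := by
    simpa using ((hasDerivAt_id (x : ℂ)).const_mul l).cexp
  have hexp_neg : HasDerivAt (fun z : ℂ => cexp (-(l * z))) (cexp (-(l * x)) * -l) x := by
    simpa using ((hasDerivAt_id (x : ℂ)).const_mul l).neg.cexp
  exact ((hexp.comp_ofReal.const_mul ((1 + γ) * l + β)).add
    (hexp_neg.comp_ofReal.const_mul ((1 - γ) * l - β))).congr_deriv (by ring)

lemma efun_zero (γ β : ℝ) (l : ℂ) : efun γ β l 0 = 2 * l := by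
  simp only [efun, Complex.ofReal_zero, mul_zero, neg_zero, Complex.exp_zero]
  ring

lemma norm_efun_div_sub_le (hL : L ≠ 0) (h : ‖L - μ‖ ≤ 1) (hx : x ∈ Set.Icc (0 : ℝ) 1) :
    ‖efun γ β L x / L - ((1 + γ : ℝ) * cexp (μ * x) + (1 - γ : ℝ) * cexp (-(μ * x)))‖
      ≤ 2 * (|1 + γ| + |1 - γ|) * Real.exp |μ.re| * ‖L - μ‖
        + 2 * |β| * Real.exp |L.re| / ‖L‖ := by
  have hsplit : efun γ β L x / L - ((1 + γ : ℝ) * cexp (μ * x) + (1 - γ : ℝ) * cexp (-(μ * x)))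
      = (1 + γ : ℝ) * (cexp (L * x) - cexp (μ * x))
        + (1 - γ : ℝ) * (cexp (-(L * x)) - cexp (-(μ * x)))
        + β / L * (cexp (L * x) - cexp (-(L * x))) := by
    simp only [efun]; field_simp; push_cast; ring
  rw [hsplit]
  refine (norm_add₃_le ..).trans ?_
  simp only [norm_mul, norm_div, Complex.norm_real, Real.norm_eq_abs]
  have h₁ := norm_cexp_mul_ofReal_sub_le h hx
  have h₂ := norm_cexp_neg_mul_ofReal_sub_le h hx
  have h₃ : ‖cexp (L * x) - cexp (-(L * x))‖ ≤ 2 * Real.exp |L.re| := by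
    linarith [norm_sub_le (cexp (L * x)) (cexp (-(L * x))),
      norm_cexp_mul_ofReal_le L hx, norm_cexp_neg_mul_ofReal_le L hx]
  calc |1 + γ| * ‖cexp (L * x) - cexp (μ * x)‖ + |1 - γ| * ‖cexp (-(L * x)) - cexp (-(μ * x))‖
        + |β| / ‖L‖ * ‖cexp (L * x) - cexp (-(L * x))‖
      ≤ |1 + γ| * (2 * Real.exp |μ.re| * ‖L - μ‖) + |1 - γ| * (2 * Real.exp |μ.re| * ‖L - μ‖)
        + |β| / ‖L‖ * (2 * Real.exp |L.re|) := by gcongr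
    _ = _ := by ring

lemma norm_deriv_efun_div_sq_sub_le (hL : L ≠ 0) (h : ‖L - μ‖ ≤ 1)
    (hx : x ∈ Set.Icc (0 : ℝ) 1) :
    ‖deriv (efun γ β L) x / L ^ 2
        - ((1 + γ : ℝ) * cexp (μ * x) - (1 - γ : ℝ) * cexp (-(μ * x)))‖
      ≤ 2 * (|1 + γ| + |1 - γ|) * Real.exp |μ.re| * ‖L - μ‖
        + 2 * |β| * Real.exp |L.re| / ‖L‖ := by
  have hsplit : deriv (efun γ β L) x / L ^ 2
        - ((1 + γ : ℝ) * cexp (μ * x) - (1 - γ : ℝ) * cexp (-(μ * x)))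
      = (1 + γ : ℝ) * (cexp (L * x) - cexp (μ * x))
        - (1 - γ : ℝ) * (cexp (-(L * x)) - cexp (-(μ * x)))
        + β / L * (cexp (L * x) + cexp (-(L * x))) := by
    rw [(hasDerivAt_efun γ β L x).deriv]; field_simp; push_cast; ring
  rw [hsplit]
  refine (norm_add_le _ _).trans ?_
  refine (add_le_add (norm_sub_le _ _) le_rfl).trans ?_
  simp only [norm_mul, norm_div, Complex.norm_real, Real.norm_eq_abs]
  have h₁ := norm_cexp_mul_ofReal_sub_le h hx
  have h₂ := norm_cexp_neg_mul_ofReal_sub_le h hx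
  have h₃ : ‖cexp (L * x) + cexp (-(L * x))‖ ≤ 2 * Real.exp |L.re| := by
    linarith [norm_add_le (cexp (L * x)) (cexp (-(L * x))),
      norm_cexp_mul_ofReal_le L hx, norm_cexp_neg_mul_ofReal_le L hx]
  calc |1 + γ| * ‖cexp (L * x) - cexp (μ * x)‖ + |1 - γ| * ‖cexp (-(L * x)) - cexp (-(μ * x))‖
        + |β| / ‖L‖ * ‖cexp (L * x) + cexp (-(L * x))‖
      ≤ |1 + γ| * (2 * Real.exp |μ.re| * ‖L - μ‖) + |1 - γ| * (2 * Real.exp |μ.re| * ‖L - μ‖)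
        + |β| / ‖L‖ * (2 * Real.exp |L.re|) := by gcongr
    _ = _ := by ring

lemma norm_mul_efun_zero_div_sq (hL : L ≠ 0) :
    ‖(β : ℂ) * efun γ β L 0 / L ^ 2‖ = 2 * |β| / ‖L‖ := by
  rw [efun_zero, show (β : ℂ) * (2 * L) / L ^ 2 = 2 * β / L by field_simp]
  simp [Complex.norm_real]

lemma norm_deriv_efun_one_div_cube_le (hL : 1 ≤ ‖L‖) :
    ‖deriv (efun γ β L) 1 / L ^ 3‖
      ≤ (|1 + γ| + |1 - γ| + 2 * |β|) * Real.exp |L.re| / ‖L‖ := by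
  have hL₀ : L ≠ 0 := norm_pos_iff.1 (one_pos.trans_le hL)
  have hsplit : deriv (efun γ β L) 1 / L ^ 3
      = (((1 + γ : ℝ) + β / L) * cexp (L * (1 : ℝ))
        - ((1 - γ : ℝ) - β / L) * cexp (-(L * (1 : ℝ)))) / L := by
    rw [(hasDerivAt_efun γ β L 1).deriv]; field_simp; push_cast; ring
  have hβL : ‖(β : ℂ) / L‖ ≤ |β| := by
    rw [norm_div, Complex.norm_real, Real.norm_eq_abs]
    exact div_le_self (abs_nonneg _) hL
  have hx : (1 : ℝ) ∈ Set.Icc (0 : ℝ) 1 := ⟨zero_le_one, le_rfl⟩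
  rw [hsplit, norm_div]
  gcongr
  refine (norm_sub_le _ _).trans ?_
  simp only [norm_mul]
  have hcoef₁ : ‖((1 + γ : ℝ) : ℂ) + β / L‖ ≤ |1 + γ| + |β| := by
    refine (norm_add_le _ _).trans (add_le_add ?_ hβL)
    rw [Complex.norm_real, Real.norm_eq_abs]
  have hcoef₂ : ‖((1 - γ : ℝ) : ℂ) - β / L‖ ≤ |1 - γ| + |β| := by
    refine (norm_sub_le _ _).trans (add_le_add ?_ hβL)
    rw [Complex.norm_real, Real.norm_eq_abs]
  calc ‖((1 + γ : ℝ) : ℂ) + β / L‖ * ‖cexp (L * (1 : ℝ))‖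
        + ‖((1 - γ : ℝ) : ℂ) - β / L‖ * ‖cexp (-(L * (1 : ℝ)))‖
      ≤ (|1 + γ| + |β|) * Real.exp |L.re| + (|1 - γ| + |β|) * Real.exp |L.re| := by
        gcongr
        · exact norm_cexp_mul_ofReal_le L hx
        · exact norm_cexp_neg_mul_ofReal_le L hx
    _ = _ := by ring

end Eigenfunction

section Asymptotics

variable {γ : ℝ} {n : ℤ}

@[simp] lemma muSeq_re (γ : ℝ) (n : ℤ) : (muSeq γ n).re = Real.log (|γ - 1| / (γ + 1)) / 2 := by
  simp [muSeq]

@[simp] lemma muSeq_im (γ : ℝ) (n : ℤ) : (muSeq γ n).im = nbeta γ n * Real.pi := by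
  simp [muSeq]

lemma abs_sub_half_le_abs_nbeta (γ : ℝ) (n : ℤ) : |(n : ℝ)| - 1 / 2 ≤ |nbeta γ n| := by
  unfold nbeta
  split_ifs
  · linarith
  · rcases abs_cases (n : ℝ) with h | h <;> rcases abs_cases ((n : ℝ) + 1 / 2) with h' | h' <;>
      linarith

lemma abs_le_norm_of_norm_sub_muSeq_le_one {L : ℂ} (hn : 2 ≤ |(n : ℝ)|)
    (h : ‖L - muSeq γ n‖ ≤ 1) : |(n : ℝ)| ≤ ‖L‖ := by
  have him : |(L - muSeq γ n).im| ≤ 1 := (Complex.abs_im_le_norm _).trans h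
  rw [Complex.sub_im, muSeq_im] at him
  have hμ : (|(n : ℝ)| - 1 / 2) * Real.pi ≤ |nbeta γ n * Real.pi| := by
    rw [abs_mul, abs_of_pos Real.pi_pos]
    exact mul_le_mul_of_nonneg_right (abs_sub_half_le_abs_nbeta γ n) Real.pi_pos.le
  have hπ : 3 * (|(n : ℝ)| - 1 / 2) ≤ (|(n : ℝ)| - 1 / 2) * Real.pi := by
    nlinarith [Real.pi_gt_three]
  have hL : |nbeta γ n * Real.pi| - 1 ≤ |L.im| := by
    linarith [abs_sub_abs_le_abs_sub (nbeta γ n * Real.pi) L.im,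
      abs_sub_comm (nbeta γ n * Real.pi) L.im]
  linarith [Complex.abs_im_le_norm L]

lemma exp_abs_re_le_of_norm_sub_muSeq_le_one {L : ℂ} (h : ‖L - muSeq γ n‖ ≤ 1) :
    Real.exp |L.re| ≤ Real.exp (|Real.log (|γ - 1| / (γ + 1))| / 2 + 1) := by
  have hre := abs_re_le_of_norm_sub_le_one h
  rw [muSeq_re, abs_div, abs_two] at hre
  exact Real.exp_le_exp.2 hre

lemma abs_sub_one_div_add_one_pos (hγ : -1 < γ) (hγ1 : γ ≠ 1) : 0 < |γ - 1| / (γ + 1) :=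
  div_pos (abs_pos.2 (sub_ne_zero.2 hγ1)) (by linarith)

lemma ofReal_mul_rpow_mul_cexp_eq (hγ : -1 < γ) (hγ1 : γ ≠ 1) (c x : ℝ) :
    ((c * (|γ - 1| / (γ + 1)) ^ (x / 2) : ℝ) : ℂ)
        * Complex.exp (Complex.I * (nbeta γ n * Real.pi * x))
      = c * cexp (muSeq γ n * x) := by
  rw [Real.rpow_def_of_pos (abs_sub_one_div_add_one_pos hγ hγ1)]
  push_cast [Complex.ofReal_exp]
  rw [mul_assoc, ← Complex.exp_add, muSeq]
  congr 2
  push_cast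
  ring

lemma ofReal_mul_rpow_neg_mul_cexp_eq (hγ : -1 < γ) (hγ1 : γ ≠ 1) (c x : ℝ) :
    ((c * (|γ - 1| / (γ + 1)) ^ (-(x / 2)) : ℝ) : ℂ)
        * Complex.exp (-(Complex.I * (nbeta γ n * Real.pi * x)))
      = c * cexp (-(muSeq γ n * x)) := by
  simpa [neg_div, mul_neg] using ofReal_mul_rpow_mul_cexp_eq (n := n) hγ hγ1 c (-x)

end Asymptotics

theorem stmt3_general (β γ : ℝ) (hγ : 0 < γ) (hγ1 : γ ≠ 1)
    (l : ℤ → ℂ) (C₀ : ℝ)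
    (hasymp : ∀ n : ℤ, n ≠ 0 → norm (l n - muSeq γ n) ≤ C₀ / |(n : ℝ)|) :
    ∃ (C : ℝ), 0 < C ∧ ∃ N : ℕ, ∀ n : ℤ, (N : ℤ) ≤ |n| → ∀ x ∈ Set.Icc (0:ℝ) 1,
      norm (efun γ β (l n) x / l n
          - (((1 + γ) * (|γ - 1| / (γ + 1)) ^ (x / 2) : ℝ)
              * Complex.exp (Complex.I * (nbeta γ n * Real.pi * x))
            + ((1 - γ) * (|γ - 1| / (γ + 1)) ^ (-(x / 2)) : ℝ)
              * Complex.exp (-(Complex.I * (nbeta γ n * Real.pi * x))))) ≤ C / |(n : ℝ)| ∧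
      norm (deriv (efun γ β (l n)) x / (l n) ^ 2
          - (((1 + γ) * (|γ - 1| / (γ + 1)) ^ (x / 2) : ℝ)
              * Complex.exp (Complex.I * (nbeta γ n * Real.pi * x))
            - ((1 - γ) * (|γ - 1| / (γ + 1)) ^ (-(x / 2)) : ℝ)
              * Complex.exp (-(Complex.I * (nbeta γ n * Real.pi * x))))) ≤ C / |(n : ℝ)| ∧
      norm ((β : ℂ) * efun γ β (l n) 0 / (l n) ^ 2) ≤ C / |(n : ℝ)| ∧
      norm (deriv (efun γ β (l n)) 1 / (l n) ^ 3) ≤ C / |(n : ℝ)| := by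
  have hγ' : -1 < γ := by linarith
  set κ := |1 + γ| + |1 - γ|
  set E := Real.exp (|Real.log (|γ - 1| / (γ + 1))| / 2 + 1)
  have hκ : 0 < κ := add_pos_of_pos_of_nonneg (abs_pos.2 (by linarith)) (abs_nonneg _)
  have hE : 1 ≤ E := Real.one_le_exp (by positivity)
  have hC₀ : 0 ≤ C₀ := by simpa using (norm_nonneg _).trans (hasymp 1 one_ne_zero)
  refine ⟨2 * κ * E * C₀ + (κ + 2 * |β|) * E, by positivity, ⌈C₀⌉₊ + 2, fun n hn x hx => ?_⟩
  have hn' : (⌈C₀⌉₊ : ℝ) + 2 ≤ |(n : ℝ)| := by rw [← Int.cast_abs]; exact_mod_cast hn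
  have hn0 : 0 < |(n : ℝ)| := by linarith [Nat.cast_nonneg (α := ℝ) ⌈C₀⌉₊]
  have hd : ‖l n - muSeq γ n‖ ≤ C₀ / |(n : ℝ)| := hasymp n (by rintro rfl; simp at hn0)
  have hd1 : ‖l n - muSeq γ n‖ ≤ 1 :=
    hd.trans ((div_le_one hn0).2 (by linarith [Nat.le_ceil C₀]))
  have hnL : |(n : ℝ)| ≤ ‖l n‖ :=
    abs_le_norm_of_norm_sub_muSeq_le_one (by linarith [Nat.cast_nonneg (α := ℝ) ⌈C₀⌉₊]) hd1
  have hL : l n ≠ 0 := norm_pos_iff.1 (hn0.trans_le hnL)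
  have hLE : Real.exp |(l n).re| ≤ E := exp_abs_re_le_of_norm_sub_muSeq_le_one hd1
  have hC : (2 * κ * E * C₀ + (κ + 2 * |β|) * E) / |(n : ℝ)|
      = 2 * κ * E * (C₀ / |(n : ℝ)|) + (κ + 2 * |β|) * E / |(n : ℝ)| := by ring
  have hinterior : 2 * κ * Real.exp |(muSeq γ n).re| * ‖l n - muSeq γ n‖
      + 2 * |β| * Real.exp |(l n).re| / ‖l n‖
      ≤ (2 * κ * E * C₀ + (κ + 2 * |β|) * E) / |(n : ℝ)| := by
    rw [hC]
    gcongr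
    · exact exp_abs_re_le_of_norm_sub_muSeq_le_one (n := n) (by simp)
    · linarith
  rw [ofReal_mul_rpow_mul_cexp_eq hγ' hγ1, ofReal_mul_rpow_neg_mul_cexp_eq hγ' hγ1]
  refine ⟨(norm_efun_div_sub_le hL hd1 hx).trans hinterior,
    (norm_deriv_efun_div_sq_sub_le hL hd1 hx).trans hinterior, ?_, ?_⟩
  · rw [norm_mul_efun_zero_div_sq hL, hC]
    calc 2 * |β| / ‖l n‖ ≤ (κ + 2 * |β|) * E / |(n : ℝ)| :=
          div_le_div₀ (by positivity) (by nlinarith [abs_nonneg β]) hn0 hnL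
      _ ≤ _ := le_add_of_nonneg_left (by positivity)
  · rw [hC]
    calc _ ≤ (κ + 2 * |β|) * Real.exp |(l n).re| / ‖l n‖ :=
          norm_deriv_efun_one_div_cube_le (by linarith)
      _ ≤ (κ + 2 * |β|) * E / |(n : ℝ)| := by gcongr
      _ ≤ _ := le_add_of_nonneg_left (by positivity)

/-- asymptotics of the (normalized) eigenfunctions `fₙ`, their
derivatives, and the boundary traces, uniformly for `x ∈ [0,1]`. -/
theorem stmt3 (m β γ : ℝ) (hm : 0 < m) (hβ : 0 < β) (hγ : 0 < γ) (hγ1 : γ ≠ 1)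
    (l : ℤ → ℂ) (hl : ∀ n, l n ≠ 0) (C₀ : ℝ) (hC₀ : 0 < C₀)
    (hasymp : ∀ n : ℤ, n ≠ 0 → norm (l n - muSeq γ n) ≤ C₀ / |(n : ℝ)|) :
    ∃ (C : ℝ), 0 < C ∧ ∃ N : ℕ, ∀ n : ℤ, (N : ℤ) ≤ |n| → ∀ x ∈ Set.Icc (0:ℝ) 1,
      norm (efun γ β (l n) x / l n
          - (((1 + γ) * (|γ - 1| / (γ + 1)) ^ (x / 2) : ℝ)
              * Complex.exp (Complex.I * (nbeta γ n * Real.pi * x))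
            + ((1 - γ) * (|γ - 1| / (γ + 1)) ^ (-(x / 2)) : ℝ)
              * Complex.exp (-(Complex.I * (nbeta γ n * Real.pi * x))))) ≤ C / |(n : ℝ)| ∧
      norm (deriv (efun γ β (l n)) x / (l n) ^ 2
          - (((1 + γ) * (|γ - 1| / (γ + 1)) ^ (x / 2) : ℝ)
              * Complex.exp (Complex.I * (nbeta γ n * Real.pi * x))
            - ((1 - γ) * (|γ - 1| / (γ + 1)) ^ (-(x / 2)) : ℝ)
              * Complex.exp (-(Complex.I * (nbeta γ n * Real.pi * x))))) ≤ C / |(n : ℝ)| ∧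
      norm ((β : ℂ) * efun γ β (l n) 0 / (l n) ^ 2) ≤ C / |(n : ℝ)| ∧
      norm (deriv (efun γ β (l n)) 1 / (l n) ^ 3) ≤ C / |(n : ℝ)| :=
  stmt3_general β γ hγ hγ1 l C₀ hasymp
end

section
/- Let m, a, α > 0 be real constants. Every λ ∈ ℂ satisfying the characteristic equation e^{2λ}(1 + α + (a+m)λ) + (1 − α) + (a − m)λ = 0 has strictly negative real part: Re λ < 0. -/
/-! Write the equation as `e^{2λ} A(λ) = -B(λ)` with `A(λ) = 1 + α + (a+m)λ` and
`B(λ) = 1 - α + (a-m)λ`. A direct computation gives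
`|A|² - |B|² = 4 (α + (m + α a) Re λ + a m |λ|²)`, which is positive on the closed right
half-plane, where also `|e^{2λ}| ≥ 1`; so `|e^{2λ} A| > |B|` there and no root can lie there. -/

open Complex

theorem re_neg_of_exp_mul_add_eq_zero {w A B : ℂ} (h : exp w * A + B = 0) (hBA : ‖B‖ < ‖A‖) :
    w.re < 0 := by
  have hnorm : Real.exp w.re * ‖A‖ = ‖B‖ := by
    rw [← norm_exp, ← norm_mul, eq_neg_of_add_eq_zero_left h, norm_neg]
  have hA : 0 < ‖A‖ := (norm_nonneg B).trans_lt hBA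
  exact Real.exp_lt_one_iff.mp (by nlinarith)

theorem normSq_add_mul_sub_normSq_sub_mul (m a α : ℝ) (z : ℂ) :
    normSq (1 + α + (a + m) * z) - normSq (1 - α + (a - m) * z)
      = 4 * (α + (m + α * a) * z.re + a * m * normSq z) := by
  simp only [normSq_apply, add_re, add_im, sub_re, sub_im, mul_re, mul_im, ofReal_re, ofReal_im,
    one_re, one_im]
  ring

theorem norm_sub_mul_lt_norm_add_mul {m a α : ℝ} (hm : 0 < m) (ha : 0 < a) (hα : 0 < α)
    {z : ℂ} (hz : 0 ≤ z.re) :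
    ‖1 - α + (a - m) * z‖ < ‖1 + α + (a + m) * z‖ := by
  have hdiff := normSq_add_mul_sub_normSq_sub_mul m a α z
  have hpos : 0 < α + (m + α * a) * z.re + a * m * normSq z := by
    have := normSq_nonneg z
    positivity
  rw [← sq_lt_sq₀ (norm_nonneg _) (norm_nonneg _), ← normSq_eq_norm_sq, ← normSq_eq_norm_sq]
  linarith

/-- every root of the characteristic equation
`e^{2λ}(1+α+(a+m)λ) + (1-α) + (a-m)λ = 0` (with `m, a, α > 0`)
has strictly negative real part. -/
theorem stmt5 (m a α : ℝ) (hm : 0 < m) (ha : 0 < a) (hα : 0 < α) (l : ℂ)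
    (hchar : Complex.exp (2 * l) * (1 + α + (a + m) * l) + (1 - α) + (a - m) * l = 0) :
    l.re < 0 := by
  by_contra! hl
  have hroot : exp (2 * l) * (1 + α + (a + m) * l) + (1 - α + (a - m) * l) = 0 := by
    rw [← hchar]; ring
  have h2l := re_neg_of_exp_mul_add_eq_zero hroot (norm_sub_mul_lt_norm_add_mul hm ha hα hl)
  simp only [mul_re, re_ofNat, im_ofNat, zero_mul, sub_zero] at h2l
  linarith
end

section
/- Let β, γ > 0 be real constants and let λ ∈ ℂ with λ ≠ 0. There exists a twice continuously differentiable function f : [0,1] → ℂ, not identically zero, satisfying f''(x) = λ² f(x) for all x ∈ (0,1), f(1) = 0, and f'(0) = (γλ + β) f(0), if and only if λ satisfies the characteristic equation λ cosh λ + (γλ + β) sinh λ = 0, equivalently e^{2λ}((1+γ)λ + β) + (1 − γ)λ − β = 0. Moreover, every twice continuously differentiable f : [0,1] → ℂ satisfying these three conditions is a scalar multiple of f_λ(x) = sinh(λ(x−1)); in particular, each nonzero eigenvalue of this boundary eigenvalue problem is geometrically simple. -/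
/-!
Both exponential factorisations `(d/dx ∓ λ)` of `d²/dx² - λ²` give first integrals:
`e^{±λx} (f' ∓ λ f)` is constant. Evaluating at `x = 1`, where `f` vanishes, and combining the
two yields `λ f(x) = f'(1) sinh (λ(x-1))` and `f'(x) = f'(1) cosh (λ(x-1))`. So every solution
is a multiple of `sinh (λ(x-1))`, and that multiple is nonzero iff `f'(1) ≠ 0`; the boundary
condition at `0` then reads `f'(1) (λ cosh λ + (γλ+β) sinh λ) = 0`.
-/

open Set Topology

theorem Set.EqOn.Icc_of_Ioo {β : Type*} [TopologicalSpace β] [T2Space β] {f g : ℝ → β}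
    {u v : ℝ} (huv : u ≠ v) (hf : Continuous f) (hg : Continuous g) (h : EqOn f g (Ioo u v)) :
    EqOn f g (Icc u v) := by
  simpa [closure_Ioo huv] using h.closure hf hg

section SinhShift

variable (a b : ℂ)

theorem hasDerivAt_sinh_mul_ofReal_sub (x : ℝ) :
    HasDerivAt (fun y : ℝ => Complex.sinh (a * ((y : ℂ) - b)))
      (a * Complex.cosh (a * ((x : ℂ) - b))) x := by
  simpa [mul_comm] using (((hasDerivAt_id (x : ℂ)).sub_const b).const_mul a).csinh.comp_ofReal

theorem hasDerivAt_cosh_mul_ofReal_sub (x : ℝ) :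
    HasDerivAt (fun y : ℝ => Complex.cosh (a * ((y : ℂ) - b)))
      (a * Complex.sinh (a * ((x : ℂ) - b))) x := by
  simpa [mul_comm] using (((hasDerivAt_id (x : ℂ)).sub_const b).const_mul a).ccosh.comp_ofReal

theorem contDiff_sinh_mul_ofReal_sub {n : WithTop ℕ∞} :
    ContDiff ℝ n (fun y : ℝ => Complex.sinh (a * ((y : ℂ) - b))) := by
  have hcomplex : ContDiff ℂ n (fun z : ℂ => Complex.sinh (a * (z - b))) :=
    Complex.contDiff_sinh.comp (contDiff_const.mul (contDiff_id.sub contDiff_const))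
  exact (hcomplex.restrict_scalars ℝ).comp Complex.ofRealCLM.contDiff

theorem deriv_deriv_sinh_mul_ofReal_sub (x : ℝ) :
    deriv (deriv fun y : ℝ => Complex.sinh (a * ((y : ℂ) - b))) x =
      a ^ 2 * Complex.sinh (a * ((x : ℂ) - b)) := by
  have hderiv : deriv (fun y : ℝ => Complex.sinh (a * ((y : ℂ) - b))) =
      fun y : ℝ => a * Complex.cosh (a * ((y : ℂ) - b)) :=
    funext fun y => (hasDerivAt_sinh_mul_ofReal_sub a b y).deriv
  rw [hderiv, ((hasDerivAt_cosh_mul_ofReal_sub a b x).const_mul a).deriv]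
  ring

variable {a}

/-- At an interior zero of `sinh (a(x-b))` the derivative `a cosh (a(x-b))` cannot also vanish. -/
theorem exists_sinh_mul_ofReal_sub_ne_zero (ha : a ≠ 0) {u v : ℝ} (huv : u < v) :
    ∃ x ∈ Icc u v, Complex.sinh (a * ((x : ℂ) - b)) ≠ 0 := by
  by_contra! hzero
  obtain ⟨x, hux, hxv⟩ := exists_between huv
  have hlocal : (fun y : ℝ => Complex.sinh (a * ((y : ℂ) - b))) =ᶠ[𝓝 x] fun _ => 0 :=
    Filter.mem_of_superset (Ioo_mem_nhds hux hxv) fun y hy => hzero y (Ioo_subset_Icc_self hy)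
  have hcosh : Complex.cosh (a * ((x : ℂ) - b)) = 0 := by
    have := hlocal.deriv_eq
    rw [(hasDerivAt_sinh_mul_ofReal_sub a b x).deriv, deriv_const] at this
    exact (mul_eq_zero.mp this).resolve_left ha
  simpa [hcosh, hzero x ⟨hux.le, hxv.le⟩] using Complex.cosh_sq_sub_sinh_sq (a * ((x : ℂ) - b))

end SinhShift

section FirstIntegrals

variable {f : ℝ → ℂ} {a : ℂ} {u v : ℝ}

theorem deriv_sub_mul_eq_exp_mul (hf : Differentiable ℝ f) (hf' : Differentiable ℝ (deriv f))
    (hode : ∀ x ∈ Icc u v, deriv (deriv f) x = a ^ 2 * f x) :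
    ∀ x ∈ Icc u v,
      deriv f x - a * f x = Complex.exp (-(a * ((x : ℂ) - v))) * (deriv f v - a * f v) := by
  set F : ℝ → ℂ := fun y => Complex.exp (a * y) * (deriv f y - a * f y)
  have hF : ∀ y ∈ Icc u v, HasDerivAt F 0 y := by
    intro y hy
    have hexp : HasDerivAt (fun y : ℝ => Complex.exp (a * y)) (Complex.exp (a * y) * a) y := by
      simpa using ((hasDerivAt_id (y : ℂ)).const_mul a).cexp.comp_ofReal
    refine (hexp.mul ((hf' y).hasDerivAt.sub ((hf y).hasDerivAt.const_mul a))).congr_deriv ?_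
    rw [hode y hy, Pi.sub_apply]
    ring
  have hconst := constant_of_has_deriv_right_zero
    (fun y hy => (hF y hy).continuousAt.continuousWithinAt)
    fun y hy => (hF y (Ico_subset_Icc_self hy)).hasDerivWithinAt
  intro x hx
  have hFx : F x = F v := (hconst x hx).trans (hconst v ⟨hx.1.trans hx.2, le_rfl⟩).symm
  have hexp : Complex.exp (a * v) = Complex.exp (a * x) * Complex.exp (-(a * ((x : ℂ) - v))) := by
    rw [← Complex.exp_add]
    ring_nf
  apply mul_left_cancel₀ (Complex.exp_ne_zero (a * x))
  rw [← mul_assoc, ← hexp]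
  exact hFx

theorem mul_eq_sinh_and_deriv_eq_cosh (hf : Differentiable ℝ f)
    (hf' : Differentiable ℝ (deriv f)) (hode : ∀ x ∈ Icc u v, deriv (deriv f) x = a ^ 2 * f x)
    (hfv : f v = 0) :
    ∀ x ∈ Icc u v, a * f x = deriv f v * Complex.sinh (a * ((x : ℂ) - v)) ∧
      deriv f x = deriv f v * Complex.cosh (a * ((x : ℂ) - v)) := by
  intro x hx
  have hplus := deriv_sub_mul_eq_exp_mul hf hf' hode x hx
  have hminus := deriv_sub_mul_eq_exp_mul (a := -a) hf hf'
    (fun y hy => by rw [hode y hy, neg_sq]) x hx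
  rw [hfv, mul_zero, sub_zero] at hplus hminus
  simp only [neg_mul, neg_neg] at hminus
  constructor
  · linear_combination (hminus - hplus - deriv f v * Complex.two_sinh (a * ((x : ℂ) - v))) / 2
  · linear_combination (hminus + hplus - deriv f v * Complex.two_cosh (a * ((x : ℂ) - v))) / 2

theorem ContDiff.mul_eq_sinh_and_deriv_eq_cosh (hf : ContDiff ℝ 2 f) (huv : u ≠ v)
    (hode : ∀ x ∈ Ioo u v, deriv (deriv f) x = a ^ 2 * f x) (hfv : f v = 0) :
    ∀ x ∈ Icc u v, a * f x = deriv f v * Complex.sinh (a * ((x : ℂ) - v)) ∧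
      deriv f x = deriv f v * Complex.cosh (a * ((x : ℂ) - v)) :=
  _root_.mul_eq_sinh_and_deriv_eq_cosh (hf.differentiable (by norm_num))
    hf.differentiable_deriv_two (EqOn.Icc_of_Ioo huv (by fun_prop) (by fun_prop) hode) hfv

end FirstIntegrals

theorem mul_cosh_add_mul_sinh_eq_zero_iff (l b c : ℂ) :
    l * Complex.cosh l + (c * l + b) * Complex.sinh l = 0 ↔
      Complex.exp (2 * l) * ((1 + c) * l + b) + (1 - c) * l - b = 0 := by
  have hfactor : Complex.exp (2 * l) * ((1 + c) * l + b) + (1 - c) * l - b =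
      2 * Complex.exp l * (l * Complex.cosh l + (c * l + b) * Complex.sinh l) := by
    simp only [Complex.cosh, Complex.sinh, Complex.exp_neg, two_mul, Complex.exp_add]
    field_simp
    ring
  simp [hfactor, Complex.exp_ne_zero]

theorem stmt8_general (β γ : ℝ) (l : ℂ) (hl : l ≠ 0) :
    ((∃ f : ℝ → ℂ, ContDiff ℝ 2 f ∧
        (∃ x ∈ Icc (0:ℝ) 1, f x ≠ 0) ∧
        (∀ x ∈ Ioo (0:ℝ) 1, deriv (deriv f) x = l ^ 2 * f x) ∧
        f 1 = 0 ∧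
        deriv f 0 = (γ * l + β) * f 0) ↔
      l * Complex.cosh l + (γ * l + β) * Complex.sinh l = 0) ∧
    ((l * Complex.cosh l + (γ * l + β) * Complex.sinh l = 0) ↔
      Complex.exp (2 * l) * ((1 + γ) * l + β) + (1 - γ) * l - β = 0) ∧
    (∀ f : ℝ → ℂ, ContDiff ℝ 2 f →
        (∀ x ∈ Ioo (0:ℝ) 1, deriv (deriv f) x = l ^ 2 * f x) →
        f 1 = 0 →
        deriv f 0 = (γ * l + β) * f 0 →
        ∃ c : ℂ, ∀ x ∈ Icc (0:ℝ) 1,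
          f x = c * Complex.sinh (l * (x - 1))) := by
  refine ⟨⟨?_, fun hchar => ?_⟩, mul_cosh_add_mul_sinh_eq_zero_iff l β γ, ?_⟩
  · rintro ⟨f, hf, ⟨x₀, hx₀, hfx₀⟩, hode, hf1, hbc⟩
    have hrep := hf.mul_eq_sinh_and_deriv_eq_cosh zero_ne_one hode hf1
    have hd : deriv f 1 ≠ 0 := by
      intro hd
      have hx₀' := (hrep x₀ hx₀).1
      rw [hd, zero_mul] at hx₀'
      exact hfx₀ ((mul_eq_zero.mp hx₀').resolve_left hl)
    obtain ⟨hf0, hf'0⟩ := hrep 0 (left_mem_Icc.mpr zero_le_one)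
    simp only [Complex.ofReal_zero, Complex.ofReal_one, zero_sub, mul_neg_one, Complex.sinh_neg,
      Complex.cosh_neg] at hf0 hf'0
    refine (mul_eq_zero.mp ?_).resolve_left hd
    linear_combination l * hbc - l * hf'0 + (γ * l + β) * hf0
  · refine ⟨_, contDiff_sinh_mul_ofReal_sub l 1, exists_sinh_mul_ofReal_sub_ne_zero 1 hl one_pos,
      fun x _ => deriv_deriv_sinh_mul_ofReal_sub l 1 x, by simp, ?_⟩
    rw [(hasDerivAt_sinh_mul_ofReal_sub l 1 0).deriv]
    simp only [Complex.ofReal_zero, zero_sub, mul_neg_one, Complex.sinh_neg, Complex.cosh_neg]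
    linear_combination hchar
  · intro f hf hode hf1 _
    refine ⟨deriv f 1 / l, fun x hx => ?_⟩
    have hx' := (hf.mul_eq_sinh_and_deriv_eq_cosh zero_ne_one hode hf1 x hx).1
    rw [Complex.ofReal_one] at hx'
    field_simp
    linear_combination hx'

/-- eigenvalue problem for the operator 𝔸:
`f'' = λ²f` on `(0,1)`, `f(1) = 0`, `f'(0) = (γλ+β)f(0)`, for `λ ≠ 0`.
A nonzero C² solution exists iff `λ cosh λ + (γλ+β) sinh λ = 0`
(equivalently `e^{2λ}((1+γ)λ+β) + (1-γ)λ - β = 0`), and every solution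
is a scalar multiple of `f_λ(x) = sinh(λ(x-1))`. -/
theorem stmt8 (β γ : ℝ) (hβ : 0 < β) (hγ : 0 < γ) (l : ℂ) (hl : l ≠ 0) :
    ((∃ f : ℝ → ℂ, ContDiff ℝ 2 f ∧
        (∃ x ∈ Icc (0:ℝ) 1, f x ≠ 0) ∧
        (∀ x ∈ Ioo (0:ℝ) 1, deriv (deriv f) x = l ^ 2 * f x) ∧
        f 1 = 0 ∧
        deriv f 0 = (γ * l + β) * f 0) ↔
      l * Complex.cosh l + (γ * l + β) * Complex.sinh l = 0) ∧
    ((l * Complex.cosh l + (γ * l + β) * Complex.sinh l = 0) ↔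
      Complex.exp (2 * l) * ((1 + γ) * l + β) + (1 - γ) * l - β = 0) ∧
    (∀ f : ℝ → ℂ, ContDiff ℝ 2 f →
        (∀ x ∈ Ioo (0:ℝ) 1, deriv (deriv f) x = l ^ 2 * f x) →
        f 1 = 0 →
        deriv f 0 = (γ * l + β) * f 0 →
        ∃ c : ℂ, ∀ x ∈ Icc (0:ℝ) 1,
          f x = c * Complex.sinh (l * (x - 1))) :=
  stmt8_general β γ l hl
end

section
/- Let β, γ > 0 be real constants. Every λ ∈ ℂ with λ ≠ 0 satisfying λ cosh λ + (γλ + β) sinh λ = 0 has strictly negative real part: Re λ < 0. -/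
/-!
Multiplying the characteristic equation by `2 exp λ` turns it into
`(w + λ) exp (2λ) = w - λ` with `w = γλ + β`. Since `Re (w conj λ) = γ|λ|² + β Re λ`,
a root with `Re λ ≥ 0` would have `‖w - λ‖ < ‖w + λ‖ ≤ ‖w + λ‖ exp (2 Re λ) = ‖w - λ‖`.
-/

open ComplexConjugate

namespace Complex

theorem mul_cosh_add_mul_sinh_eq_zero_iff (a b z : ℂ) :
    a * cosh z + b * sinh z = 0 ↔ (b + a) * exp (2 * z) = b - a := by
  have hexp : exp (2 * z) = exp z * exp z := by rw [two_mul, exp_add]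
  have hinv : exp z * exp (-z) = 1 := by rw [← exp_add, add_neg_cancel, exp_zero]
  have hscaled : 2 * exp z * (a * cosh z + b * sinh z) = (b + a) * exp (2 * z) - (b - a) := by
    linear_combination a * exp z * two_cosh z + b * exp z * two_sinh z - (b - a) * hinv
      - (b + a) * hexp
  have h2exp : 2 * exp z ≠ 0 := mul_ne_zero two_ne_zero (exp_ne_zero z)
  rw [← sub_eq_zero (a := (b + a) * exp (2 * z)), ← hscaled, mul_eq_zero, or_iff_right h2exp]

theorem norm_sub_lt_norm_add {w z : ℂ} (h : 0 < (w * conj z).re) : ‖w - z‖ < ‖w + z‖ := by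
  rw [← pow_lt_pow_iff_left₀ (norm_nonneg _) (norm_nonneg _) two_ne_zero, Complex.sq_norm,
    Complex.sq_norm, normSq_add, normSq_sub]
  linarith

theorem re_affine_mul_conj_pos {β γ : ℝ} (hβ : 0 ≤ β) (hγ : 0 < γ) {z : ℂ} (hz : z ≠ 0)
    (hre : 0 ≤ z.re) : 0 < ((γ * z + β) * conj z).re := by
  have hexpand : ((γ * z + β) * conj z).re = γ * normSq z + β * z.re := by
    rw [add_mul, mul_assoc, mul_conj]
    simp
  rw [hexpand]
  exact add_pos_of_pos_of_nonneg (mul_pos hγ (normSq_pos.mpr hz)) (mul_nonneg hβ hre)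

end Complex

/-- every nonzero root of `λ cosh λ + (γλ+β) sinh λ = 0`
(with `β, γ > 0`) has strictly negative real part. -/
theorem stmt9 (β γ : ℝ) (hβ : 0 < β) (hγ : 0 < γ) (l : ℂ) (hl : l ≠ 0)
    (hchar : l * Complex.cosh l + (γ * l + β) * Complex.sinh l = 0) :
    l.re < 0 := by
  by_contra! hre
  set w : ℂ := γ * l + β
  have hexp : (w + l) * Complex.exp (2 * l) = w - l :=
    (Complex.mul_cosh_add_mul_sinh_eq_zero_iff l w l).mp hchar
  have hnorm : ‖w + l‖ * Real.exp (2 * l.re) = ‖w - l‖ := by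
    simpa [Complex.norm_exp] using congrArg norm hexp
  have hlt : ‖w - l‖ < ‖w + l‖ :=
    Complex.norm_sub_lt_norm_add (Complex.re_affine_mul_conj_pos hβ.le hγ hl hre)
  have hge : ‖w + l‖ ≤ ‖w + l‖ * Real.exp (2 * l.re) :=
    le_mul_of_one_le_right (norm_nonneg _) (Real.one_le_exp (by linarith))
  linarith
end

section
/- Let m, a, α, β, γ > 0 be real constants and let λ ∈ ℂ with λ ≠ 0. There exist twice continuously differentiable functions f, φ : [0,1] → ℂ, not both identically zero, satisfying f''(x) = λ² f(x) and φ''(x) = λ² φ(x) for all x ∈ (0,1), f(0) = 0, (1 + aλ) f'(1) + λ(α + mλ) f(1) = (1 + aλ) φ'(1), φ(1) = 0, and φ'(0) = (γλ + β) φ(0), if and only if at least one of the following two characteristic equations holds: e^{2λ}(1 + α + (a+m)λ) + (1 − α) + (a − m)λ = 0, or λ cosh λ + (γλ + β) sinh λ = 0. -/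
/-!
A `C²` solution of `f'' = λ² f` on `[0, 1]` is determined by its value and slope at any point
`x₀`: `λ f x = f' x₀ sinh (λ (x - x₀)) + λ f x₀ cosh (λ (x - x₀))`, because the two Wronskian-type
combinations of `(f', λ f)` with `(cosh, sinh) (λ (x - x₀))` have zero derivative. With `f 0 = 0`
and `φ 1 = 0` this gives `λ f = f' 0 sinh (λ x)` and `λ φ = φ' 1 sinh (λ (x - 1))`, and the two
remaining boundary conditions become
  `λ f' 0 D(λ) = (1 + aλ) λ φ' 1`  and  `φ' 1 E(λ) = 0`,
where `D(λ) = (1 + aλ) cosh λ + (α + mλ) sinh λ` (`plantChar`, the operator `A`) and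
`E(λ) = λ cosh λ + (γλ + β) sinh λ` (`auxChar`, the operator `𝔸`). A nonzero pair therefore exists
iff `D(λ) = 0` (take `φ = 0`) or `E(λ) = 0` (take `φ' 1 = λ` and solve for `f' 0`), and
`e^{2λ} (1 + α + (a + m) λ) + (1 - α) + (a - m) λ = 2 e^λ D(λ)`.
-/

open Set Complex

section Hyperbolic

variable (l : ℂ) (x₀ : ℝ)

theorem hasDerivAt_mul_sub (x : ℝ) : HasDerivAt (fun x : ℝ => l * (x - x₀)) l x := by
  simpa using ((hasDerivAt_id x).ofReal_comp.sub_const (x₀ : ℂ)).const_mul l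

theorem hasDerivAt_sinh_mul_sub (x : ℝ) :
    HasDerivAt (fun x : ℝ => sinh (l * (x - x₀))) (l * cosh (l * (x - x₀))) x :=
  ((hasDerivAt_sinh _).comp x (hasDerivAt_mul_sub l x₀ x)).congr_deriv (mul_comm _ _)

theorem hasDerivAt_cosh_mul_sub (x : ℝ) :
    HasDerivAt (fun x : ℝ => cosh (l * (x - x₀))) (l * sinh (l * (x - x₀))) x :=
  ((hasDerivAt_cosh _).comp x (hasDerivAt_mul_sub l x₀ x)).congr_deriv (mul_comm _ _)

noncomputable def sinhAt (x : ℝ) : ℂ := sinh (l * (x - x₀))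

theorem contDiff_sinhAt : ContDiff ℝ 2 (sinhAt l x₀) :=
  (contDiff_sinh.restrict_scalars ℝ).comp
    (contDiff_const.mul (ofRealCLM.contDiff.sub contDiff_const))

theorem deriv_sinhAt : deriv (sinhAt l x₀) = fun x : ℝ => l * cosh (l * (x - x₀)) :=
  funext fun x => (hasDerivAt_sinh_mul_sub l x₀ x).deriv

theorem deriv_deriv_sinhAt : deriv (deriv (sinhAt l x₀)) = fun x => l ^ 2 * sinhAt l x₀ x := by
  rw [deriv_sinhAt]
  funext x
  rw [((hasDerivAt_cosh_mul_sub l x₀ x).const_mul l).deriv, sinhAt, sq, mul_assoc]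

theorem exists_sinhAt_ne_zero (hl : l ≠ 0) {a b : ℝ} (hab : a < b) :
    ∃ x ∈ Icc a b, sinhAt l x₀ x ≠ 0 := by
  by_contra! h
  obtain ⟨c, hac, hcb⟩ := exists_between hab
  have hc : Icc a b ∈ nhds c := Icc_mem_nhds hac hcb
  have hderiv : l * cosh (l * (c - x₀)) = 0 := by
    rw [← congrFun (deriv_sinhAt l x₀) c, (Filter.eventuallyEq_of_mem hc h).deriv_eq, deriv_const]
  have := cosh_sq_sub_sinh_sq (l * (c - x₀))
  rw [(mul_eq_zero.1 hderiv).resolve_left hl, ← sinhAt, h c ⟨hac.le, hcb.le⟩] at this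
  norm_num at this

end Hyperbolic

theorem eq_of_forall_hasDerivAt_zero {E : Type*} [NormedAddCommGroup E] [NormedSpace ℝ E]
    {W : ℝ → E} {a b x y : ℝ} (hW : ∀ t ∈ Icc a b, HasDerivAt W 0 t) (hx : x ∈ Icc a b)
    (hy : y ∈ Icc a b) : W x = W y := by
  have hconst := constant_of_has_deriv_right_zero
    (fun t ht => (hW t ht).continuousAt.continuousWithinAt)
    (fun t ht => (hW t (Ico_subset_Icc_self ht)).hasDerivWithinAt)
  rw [hconst x hx, hconst y hy]

theorem mul_eq_sinh_add_cosh_of_deriv_deriv {l : ℂ} {f : ℝ → ℂ} {a b x₀ x : ℝ}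
    (hf : ContDiff ℝ 2 f) (hab : a ≠ b)
    (hode : ∀ x ∈ Ioo a b, deriv (deriv f) x = l ^ 2 * f x)
    (hx₀ : x₀ ∈ Icc a b) (hx : x ∈ Icc a b) :
    l * f x = deriv f x₀ * sinh (l * (x - x₀)) + l * f x₀ * cosh (l * (x - x₀)) ∧
      deriv f x = deriv f x₀ * cosh (l * (x - x₀)) + l * f x₀ * sinh (l * (x - x₀)) := by
  have hd : Differentiable ℝ f := hf.differentiable two_ne_zero
  have hd' : Differentiable ℝ (deriv f) := hf.differentiable_deriv_two
  have hode' : ∀ t ∈ Icc a b, HasDerivAt (deriv f) (l ^ 2 * f t) t := by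
    intro t ht
    rw [← closure_Ioo hab] at ht
    exact (hd' t).hasDerivAt.congr_deriv <| EqOn.closure hode
      (ContDiff.deriv' (n := 1) hf).continuous_deriv_one (continuous_const.mul hd.continuous) ht
  set s := fun t : ℝ => sinh (l * (t - x₀))
  set c := fun t : ℝ => cosh (l * (t - x₀))
  have hW₁ : ∀ t ∈ Icc a b,
      HasDerivAt (fun t => deriv f t * c t - l * f t * s t) 0 t := fun t ht =>
    (((hode' t ht).mul (hasDerivAt_cosh_mul_sub l x₀ t)).sub
      (((hd t).hasDerivAt.const_mul l).mul (hasDerivAt_sinh_mul_sub l x₀ t))).congr_deriv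
        (by ring)
  have hW₂ : ∀ t ∈ Icc a b,
      HasDerivAt (fun t => deriv f t * s t - l * f t * c t) 0 t := fun t ht =>
    (((hode' t ht).mul (hasDerivAt_sinh_mul_sub l x₀ t)).sub
      (((hd t).hasDerivAt.const_mul l).mul (hasDerivAt_cosh_mul_sub l x₀ t))).congr_deriv
        (by ring)
  have e₁ := eq_of_forall_hasDerivAt_zero hW₁ hx hx₀
  have e₂ := eq_of_forall_hasDerivAt_zero hW₂ hx hx₀
  simp only [s, c, sub_self, mul_zero, cosh_zero, sinh_zero] at e₁ e₂
  have e₃ := cosh_sq_sub_sinh_sq (l * (x - x₀))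
  constructor
  · linear_combination (-cosh (l * (x - x₀))) * e₂ + sinh (l * (x - x₀)) * e₁ - l * f x * e₃
  · linear_combination (-sinh (l * (x - x₀))) * e₂ + cosh (l * (x - x₀)) * e₁ - deriv f x * e₃

section ClosedLoop

variable (m a α β γ : ℝ) (l : ℂ)

def IsClosedLoopEigenpair (f φ : ℝ → ℂ) : Prop :=
  ContDiff ℝ 2 f ∧ ContDiff ℝ 2 φ ∧
    (∃ x ∈ Icc (0:ℝ) 1, f x ≠ 0 ∨ φ x ≠ 0) ∧
    (∀ x ∈ Ioo (0:ℝ) 1, deriv (deriv f) x = l ^ 2 * f x) ∧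
    (∀ x ∈ Ioo (0:ℝ) 1, deriv (deriv φ) x = l ^ 2 * φ x) ∧
    f 0 = 0 ∧
    (1 + a * l) * deriv f 1 + l * (α + m * l) * f 1 = (1 + a * l) * deriv φ 1 ∧
    φ 1 = 0 ∧
    deriv φ 0 = (γ * l + β) * φ 0

noncomputable def plantChar : ℂ := (1 + a * l) * cosh l + (α + m * l) * sinh l

noncomputable def auxChar : ℂ := l * cosh l + (γ * l + β) * sinh l

theorem two_mul_exp_mul_plantChar :
    2 * exp l * plantChar m a α l =
      exp (2 * l) * (1 + α + (a + m) * l) + (1 - α) + (a - m) * l := by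
  rw [plantChar, two_mul l, exp_add, cosh, sinh, exp_neg]
  field_simp
  ring

variable {m a α β γ l}

theorem IsClosedLoopEigenpair.plantChar_eq_zero_or_auxChar_eq_zero (hl : l ≠ 0) {f φ : ℝ → ℂ}
    (h : IsClosedLoopEigenpair m a α β γ l f φ) : plantChar m a α l = 0 ∨ auxChar β γ l = 0 := by
  obtain ⟨hf, hφ, ⟨x, hx, hne⟩, hodef, hodeφ, hf0, hbc₁, hφ1, hbc₀⟩ := h
  have repf := fun x (hx : x ∈ Icc (0:ℝ) 1) =>
    mul_eq_sinh_add_cosh_of_deriv_deriv hf zero_ne_one hodef (left_mem_Icc.2 zero_le_one) hx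
  have repφ := fun x (hx : x ∈ Icc (0:ℝ) 1) =>
    mul_eq_sinh_add_cosh_of_deriv_deriv hφ zero_ne_one hodeφ (right_mem_Icc.2 zero_le_one) hx
  simp only [hf0, hφ1, mul_zero, zero_mul, add_zero] at repf repφ
  have hf1 := repf 1 (right_mem_Icc.2 zero_le_one)
  have hφ0 := repφ 0 (left_mem_Icc.2 zero_le_one)
  push_cast at hf1 hφ0
  simp only [sub_zero, zero_sub, mul_one, mul_neg, sinh_neg, cosh_neg] at hf1 hφ0
  have hnontriv : deriv f 0 ≠ 0 ∨ deriv φ 1 ≠ 0 := by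
    by_contra! h0
    rcases hne with hne | hne
    · exact hne ((mul_eq_zero.1 (by simpa [h0.1] using (repf x hx).1)).resolve_left hl)
    · exact hne ((mul_eq_zero.1 (by simpa [h0.2] using (repφ x hx).1)).resolve_left hl)
  have hplant : l * deriv f 0 * plantChar m a α l = (1 + a * l) * l * deriv φ 1 := by
    rw [plantChar]
    linear_combination l * hbc₁ - (1 + a * l) * l * hf1.2 - (α + m * l) * l * hf1.1
  have haux : deriv φ 1 * auxChar β γ l = 0 := by
    rw [auxChar]
    linear_combination (-l) * hφ0.2 + l * hbc₀ + (γ * l + β) * hφ0.1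
  by_cases hφ' : deriv φ 1 = 0
  · left
    rw [hφ', mul_zero] at hplant
    have hf' : deriv f 0 ≠ 0 := hnontriv.resolve_right (not_not.2 hφ')
    exact (mul_eq_zero.1 hplant).resolve_left (mul_ne_zero hl hf')
  · exact Or.inr ((mul_eq_zero.1 haux).resolve_left hφ')

theorem isClosedLoopEigenpair_plantMode (hl : l ≠ 0) (hD : plantChar m a α l = 0) :
    IsClosedLoopEigenpair m a α β γ l (sinhAt l 0) 0 := by
  obtain ⟨x, hx, hne⟩ := exists_sinhAt_ne_zero l 0 hl zero_lt_one
  refine ⟨contDiff_sinhAt l 0, contDiff_const, ⟨x, hx, Or.inl hne⟩, fun x _ => by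
    rw [deriv_deriv_sinhAt], fun x _ => by simp, by simp [sinhAt], ?_, rfl, by simp⟩
  unfold plantChar at hD
  rw [deriv_sinhAt]
  simp only [sinhAt]
  push_cast
  simp only [sub_zero, mul_one, deriv_zero, Pi.zero_apply, mul_zero]
  linear_combination l * hD

theorem isClosedLoopEigenpair_auxMode (hl : l ≠ 0) (hD : plantChar m a α l ≠ 0)
    (hE : auxChar β γ l = 0) :
    IsClosedLoopEigenpair m a α β γ l
      (fun x => (1 + a * l) / plantChar m a α l * sinhAt l 0 x) (sinhAt l 1) := by
  obtain ⟨x, hx, hne⟩ := exists_sinhAt_ne_zero l 1 hl zero_lt_one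
  refine ⟨contDiff_const.mul (contDiff_sinhAt l 0), contDiff_sinhAt l 1, ⟨x, hx, Or.inr hne⟩,
    fun x _ => ?_, fun x _ => by rw [deriv_deriv_sinhAt], by simp [sinhAt], ?_, by simp [sinhAt],
    ?_⟩
  · simp only [deriv_const_mul_field', deriv_deriv_sinhAt]
    ring
  · rw [deriv_const_mul_field', deriv_sinhAt, deriv_sinhAt]
    simp only [sinhAt]
    push_cast
    simp only [sub_zero, mul_one, sub_self, mul_zero, cosh_zero]
    field_simp
    rw [plantChar]
    ring
  · rw [deriv_sinhAt, sinhAt]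
    push_cast
    simp only [zero_sub, mul_neg, mul_one, cosh_neg, sinh_neg]
    rw [auxChar] at hE
    linear_combination hE

theorem exists_isClosedLoopEigenpair_iff (hl : l ≠ 0) :
    (∃ f φ, IsClosedLoopEigenpair m a α β γ l f φ) ↔
      plantChar m a α l = 0 ∨ auxChar β γ l = 0 := by
  refine ⟨fun ⟨f, φ, h⟩ => h.plantChar_eq_zero_or_auxChar_eq_zero hl, fun h => ?_⟩
  by_cases hD : plantChar m a α l = 0
  · exact ⟨_, _, isClosedLoopEigenpair_plantMode hl hD⟩
  · exact ⟨_, _, isClosedLoopEigenpair_auxMode hl hD (h.resolve_left hD)⟩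

end ClosedLoop

theorem stmt15_general (m a α β γ : ℝ) (l : ℂ) (hl : l ≠ 0) :
    (∃ f φ : ℝ → ℂ, ContDiff ℝ 2 f ∧ ContDiff ℝ 2 φ ∧
        (∃ x ∈ Icc (0:ℝ) 1, f x ≠ 0 ∨ φ x ≠ 0) ∧
        (∀ x ∈ Ioo (0:ℝ) 1, deriv (deriv f) x = l ^ 2 * f x) ∧
        (∀ x ∈ Ioo (0:ℝ) 1, deriv (deriv φ) x = l ^ 2 * φ x) ∧
        f 0 = 0 ∧
        (1 + a * l) * deriv f 1 + l * (α + m * l) * f 1 = (1 + a * l) * deriv φ 1 ∧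
        φ 1 = 0 ∧
        deriv φ 0 = (γ * l + β) * φ 0) ↔
    (Complex.exp (2 * l) * (1 + α + (a + m) * l) + (1 - α) + (a - m) * l = 0 ∨
      l * Complex.cosh l + (γ * l + β) * Complex.sinh l = 0) := by
  rw [← two_mul_exp_mul_plantChar, mul_eq_zero,
    or_iff_right (mul_ne_zero two_ne_zero (exp_ne_zero l))]
  exact exists_isClosedLoopEigenpair_iff hl

/-- eigenvalue problem for the closed-loop operator 𝒜₁, a coupled
pair of boundary value problems for `f` (plant) and `φ` (auxiliary variable q̂).
For `λ ≠ 0`, a not-both-zero C² solution pair exists iff λ satisfies the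
characteristic equation of A or that of 𝔸. -/
theorem stmt15 (m a α β γ : ℝ) (hm : 0 < m) (ha : 0 < a) (hα : 0 < α)
    (hβ : 0 < β) (hγ : 0 < γ) (l : ℂ) (hl : l ≠ 0) :
    (∃ f φ : ℝ → ℂ, ContDiff ℝ 2 f ∧ ContDiff ℝ 2 φ ∧
        (∃ x ∈ Icc (0:ℝ) 1, f x ≠ 0 ∨ φ x ≠ 0) ∧
        (∀ x ∈ Ioo (0:ℝ) 1, deriv (deriv f) x = l ^ 2 * f x) ∧
        (∀ x ∈ Ioo (0:ℝ) 1, deriv (deriv φ) x = l ^ 2 * φ x) ∧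
        f 0 = 0 ∧
        (1 + a * l) * deriv f 1 + l * (α + m * l) * f 1 = (1 + a * l) * deriv φ 1 ∧
        φ 1 = 0 ∧
        deriv φ 0 = (γ * l + β) * φ 0) ↔
    (Complex.exp (2 * l) * (1 + α + (a + m) * l) + (1 - α) + (a - m) * l = 0 ∨
      l * Complex.cosh l + (γ * l + β) * Complex.sinh l = 0) :=
  stmt15_general m a α β γ l hl
end
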